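/- arXiv:1006.3105 — 8 statements merged into one kernel-verified Lean document; each statement's English description precedes it below -/
import Mathlib

section
/- Let Ω ⊆ ℂ be open, f : Ω → ℂ be continuously differentiable (as a function of two real variables), and S ⊆ ℂ. Let p ∈ Ω ∩ S, and suppose there exist two unit complex numbers t₁, t₂ with t₁ ≠ t₂ and t₁ ≠ -t₂ such that both t₁ and t₂ are limit directions of S at p. If there is a holomorphic function F on a neighborhood of p with F = f on S near p, then ∂f/∂z̄ = 0 at p. -/
/-!
A limit direction of `S` at `p` lies in the real tangent cone of `S` at `p`. Two unit directions
`t₁ ≠ ±t₂` are `ℝ`-linearly independent, so they span `ℂ` and the real derivative of a function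
within `S` at `p` is unique. Since `f = F` on `S` near `p`, the real derivative of `f` at `p` is
the `ℂ`-linear derivative of the holomorphic `F`, whose `∂/∂z̄` part vanishes.
-/

open Complex Filter

/-- `t` is a limit direction of `S` at `p`. -/
def IsLimitDirection (S : Set ℂ) (p t : ℂ) : Prop :=
  ‖t‖ = 1 ∧ ∃ q : ℕ → ℂ, (∀ j, q j ∈ S \ {p}) ∧
    Tendsto q atTop (nhds p) ∧
    Tendsto (fun j => (q j - p) / (‖q j - p‖ : ℂ)) atTop (nhds t)

open Topology

theorem IsLimitDirection.mem_tangentConeAt {S : Set ℂ} {p t : ℂ} (h : IsLimitDirection S p t) :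
    t ∈ tangentConeAt ℝ S p := by
  obtain ⟨-, q, hqS, hqp, hdir⟩ := h
  refine mem_tangentConeAt_of_seq atTop (fun j ↦ ‖q j - p‖⁻¹) (fun j ↦ q j - p)
    (by simpa using hqp.sub_const p) (.of_forall fun j ↦ by simpa using (hqS j).1) ?_
  refine hdir.congr fun j ↦ ?_
  rw [real_smul, div_eq_inv_mul, ofReal_inv]

theorem linearIndependent_pair_of_norm_eq_one {E : Type*} [NormedAddCommGroup E]
    [NormedSpace ℝ E] {x y : E} (hx : ‖x‖ = 1) (hy : ‖y‖ = 1) (hxy : x ≠ y) (hxy' : x ≠ -y) :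
    LinearIndependent ℝ ![x, y] := by
  refine (LinearIndependent.pair_iff' (norm_ne_zero_iff.mp (hx ▸ one_ne_zero))).mpr
    fun a hay ↦ ?_
  have ha : |a| = 1 := by simpa [norm_smul, hx, hy] using congrArg norm hay
  rcases abs_eq zero_le_one |>.mp ha with rfl | rfl
  · exact hxy (by simpa using hay)
  · exact hxy' (by rw [← hay]; simp)

theorem uniqueDiffWithinAt_of_isLimitDirection {S : Set ℂ} {p t₁ t₂ : ℂ} (hp : p ∈ S)
    (h₁ : IsLimitDirection S p t₁) (h₂ : IsLimitDirection S p t₂) (hne : t₁ ≠ t₂)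
    (hne' : t₁ ≠ -t₂) : UniqueDiffWithinAt ℝ S p := by
  refine ⟨?_, subset_closure hp⟩
  have hspan : Submodule.span ℝ (Set.range ![t₁, t₂]) = ⊤ :=
    (linearIndependent_pair_of_norm_eq_one h₁.1 h₂.1 hne hne').span_eq_top_of_card_eq_finrank'
      (by simp)
  have hsub : Set.range ![t₁, t₂] ⊆ tangentConeAt ℝ S p :=
    Set.range_subset_iff.2 <| Fin.forall_fin_two.2 ⟨h₁.mem_tangentConeAt, h₂.mem_tangentConeAt⟩
  have htop : Submodule.span ℝ (tangentConeAt ℝ S p) = ⊤ :=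
    top_unique <| hspan.ge.trans (Submodule.span_mono hsub)
  rw [htop, Submodule.top_coe]
  exact dense_univ

theorem ContinuousLinearMap.apply_one_add_I_mul_apply_I (L : ℂ →L[ℂ] ℂ) :
    L 1 + I * L I = 0 := by
  have hLI : L I = I * L 1 := by simpa using L.map_smul I 1
  rw [hLI, ← mul_assoc, I_mul_I]
  ring

theorem stmt0 (Ω S : Set ℂ) (hΩ : IsOpen Ω) (f : ℂ → ℂ)
    (hf : ContDiffOn ℝ 1 f Ω) (p : ℂ) (hp : p ∈ Ω ∩ S)
    (t₁ t₂ : ℂ) (h1 : IsLimitDirection S p t₁) (h2 : IsLimitDirection S p t₂)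
    (hne : t₁ ≠ t₂) (hne' : t₁ ≠ -t₂)
    (hext : ∃ U F, IsOpen U ∧ p ∈ U ∧ DifferentiableOn ℂ F U ∧
      Set.EqOn f F (S ∩ U)) :
    (1 / 2 : ℂ) * (fderiv ℝ f p 1 + Complex.I * fderiv ℝ f p Complex.I) = 0 := by
  obtain ⟨U, F, hU, hpU, hF, hfF⟩ := hext
  have hf' : HasFDerivAt f (fderiv ℝ f p) p :=
    ((hf.differentiableOn one_ne_zero).differentiableAt (hΩ.mem_nhds hp.1)).hasFDerivAt
  have hF' : HasFDerivAt F ((fderiv ℂ F p).restrictScalars ℝ) p :=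
    (hF.differentiableAt (hU.mem_nhds hpU)).hasFDerivAt.restrictScalars ℝ
  have hfF_near : f =ᶠ[𝓝[S] p] F := by
    filter_upwards [self_mem_nhdsWithin, nhdsWithin_le_nhds (hU.mem_nhds hpU)]
      with z hzS hzU using hfF ⟨hzS, hzU⟩
  have hderiv : fderiv ℝ f p = (fderiv ℂ F p).restrictScalars ℝ :=
    (uniqueDiffWithinAt_of_isLimitDirection hp.2 h1 h2 hne hne').eq hf'.hasFDerivWithinAt
      (hF'.hasFDerivWithinAt.congr_of_eventuallyEq hfF_near (hfF ⟨hp.2, hpU⟩))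
  rw [hderiv, ContinuousLinearMap.coe_restrictScalars',
    (fderiv ℂ F p).apply_one_add_I_mul_apply_I, mul_zero]
end

section
/- Let S ⊆ ℂ. Suppose there exists a point p ∈ S at which S has two limit directions t₁, t₂ with t₁ ≠ ±t₂. Then S has the Hartogs property with respect to translations: for any open connected set Ω ⊆ ℂ and any C^∞ function f : Ω → ℂ such that for every translation L(z) = z + c, the restriction of f to L(S) ∩ Ω extends holomorphically to an open neighborhood of L(S) ∩ Ω, the function f is holomorphic on Ω. -/
open Complex Filter

section Aux

open Asymptotics

/-- If `g` is real-differentiable at `z` with derivative `L`, vanishes at `z` and along a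
sequence approaching `z` with limit direction `t`, then `L t = 0`. -/
lemma aux_dir_deriv_zero {g : ℂ → ℂ} {z t : ℂ} {L : ℂ →L[ℝ] ℂ}
    (hg : HasFDerivAt g L z) (hgz : g z = 0)
    (q : ℕ → ℂ) (hqz : ∀ j, q j ≠ z)
    (hg0 : ∀ᶠ j in atTop, g (q j) = 0)
    (hql : Tendsto q atTop (nhds z))
    (hdir : Tendsto (fun j => (q j - z) / (‖q j - z‖ : ℂ)) atTop (nhds t)) :
    L t = 0 := by
  have keydiv : ∀ (w : ℂ) (r : ℝ), L (w / (r : ℂ)) = L w / (r : ℂ) := by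
    intro w r
    rw [div_eq_inv_mul, div_eq_inv_mul, ← Complex.ofReal_inv, ← Complex.real_smul,
      ← Complex.real_smul, L.map_smul]
  -- the little-o statement along the sequence
  have h0 : Tendsto (fun j => q j - z) atTop (nhds 0) := by
    have : Tendsto (fun j => q j - z) atTop (nhds (z - z)) := hql.sub tendsto_const_nhds
    simpa using this
  have hlo : (fun h : ℂ => g (z + h) - g z - L h) =o[nhds 0] fun h => h :=
    hasFDerivAt_iff_isLittleO_nhds_zero.mp hg
  have hlo2 : (fun j => g (z + (q j - z)) - g z - L (q j - z)) =o[atTop] fun j => q j - z :=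
    hlo.comp_tendsto h0
  have hlo3 : (fun j => L (q j - z)) =o[atTop] fun j => q j - z := by
    have := hlo2.neg_left
    refine this.congr' ?_ (by rfl)
    filter_upwards [hg0] with j hj
    simp [hj, hgz]
  have htend : Tendsto (fun j => L (q j - z) / (q j - z)) atTop (nhds 0) := by
    rw [← isLittleO_iff_tendsto']
    · exact hlo3
    · filter_upwards with j hj
      exact absurd (sub_eq_zero.mp hj) (hqz j)
  -- transfer via norms
  have hnorm : Tendsto (fun j => L ((q j - z) / (‖q j - z‖ : ℂ))) atTop (nhds 0) := by
    rw [tendsto_zero_iff_norm_tendsto_zero]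
    rw [tendsto_zero_iff_norm_tendsto_zero] at htend
    refine htend.congr fun j => ?_
    rw [keydiv]
    rw [norm_div, norm_div]
    simp
  have hLt : Tendsto (fun j => L ((q j - z) / (‖q j - z‖ : ℂ))) atTop (nhds (L t)) :=
    (L.continuous.tendsto t).comp hdir
  exact tendsto_nhds_unique hLt hnorm

/-- Two unit vectors with `t₁ ≠ ±t₂` kill a real-linear map only if it is zero. -/
lemma aux_clm_eq_zero {t₁ t₂ : ℂ} (h1 : ‖t₁‖ = 1) (h2 : ‖t₂‖ = 1)
    (hne : t₁ ≠ t₂) (hne' : t₁ ≠ -t₂) (L : ℂ →L[ℝ] ℂ)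
    (hL1 : L t₁ = 0) (hL2 : L t₂ = 0) : L = 0 := by
  have ht1 : t₁ ≠ 0 := by intro h; simp [h] at h1
  have ht2 : t₂ ≠ 0 := by intro h; simp [h] at h2
  have hli : LinearIndependent ℝ ![t₁, t₂] := by
    rw [LinearIndependent.pair_iff]
    intro a b hab
    rcases eq_or_ne a 0 with ha | ha
    · subst ha
      simp only [zero_smul, zero_add] at hab
      rcases smul_eq_zero.mp hab with h | h
      · exact ⟨rfl, h⟩
      · exact absurd h ht2
    · exfalso
      have hb : b ≠ 0 := by
        rintro rfl
        simp only [zero_smul, add_zero] at hab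
        exact ha (by rcases smul_eq_zero.mp hab with h | h; exact h; exact absurd h ht1)
      have heq : a • t₁ = -(b • t₂) := by linear_combination hab
      have hnorms : |a| = |b| := by
        have := congrArg norm heq
        simpa [norm_smul, h1, h2] using this
      rcases abs_eq_abs.mp hnorms with hcase | hcase
      · -- a = b : a t₁ + a t₂ = 0 so t₁ = -t₂
        subst hcase
        apply hne'
        have : a • (t₁ + t₂) = 0 := by rw [smul_add]; exact hab
        have h0 : t₁ + t₂ = 0 := by
          rcases smul_eq_zero.mp this with h | h
          · exact absurd h ha
          · exact h
        exact eq_neg_of_add_eq_zero_left h0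
      · -- a = -b
        apply hne
        have hba : b = -a := by linarith
        subst hba
        have : a • (t₁ - t₂) = 0 := by
          rw [smul_sub, sub_eq_add_neg, ← neg_smul]
          exact hab
        have h0 : t₁ - t₂ = 0 := by
          rcases smul_eq_zero.mp this with h | h
          · exact absurd h ha
          · exact h
        exact sub_eq_zero.mp h0
  have bcard : Fintype.card (Fin 2) = Module.finrank ℝ ℂ := by
    simp [Complex.finrank_real_complex]
  let b := basisOfLinearIndependentOfCardEqFinrank hli bcard
  have hb : ∀ i, b i = ![t₁, t₂] i := fun i =>
    coe_basisOfLinearIndependentOfCardEqFinrank hli bcard ▸ rfl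
  ext w
  have : L.toLinearMap = (0 : ℂ →ₗ[ℝ] ℂ) := by
    apply b.ext
    intro i
    rw [hb i]
    fin_cases i <;> simpa
  exact congrFun (congrArg (fun m => m.toFun) this) w

end Aux

/-- `f` restricted to `T` extends holomorphically to an open neighborhood of `T`. -/
def ExtendsHolomorphicallyOn (f : ℂ → ℂ) (T : Set ℂ) : Prop :=
  ∃ U F, IsOpen U ∧ T ⊆ U ∧ DifferentiableOn ℂ F U ∧ Set.EqOn f F T

theorem stmt1 (S : Set ℂ) (p : ℂ) (hp : p ∈ S)
    (t₁ t₂ : ℂ) (h1 : IsLimitDirection S p t₁) (h2 : IsLimitDirection S p t₂)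
    (hne : t₁ ≠ t₂) (hne' : t₁ ≠ -t₂)
    (Ω : Set ℂ) (hΩ : IsOpen Ω) (hconn : IsConnected Ω)
    (f : ℂ → ℂ) (hf : ContDiffOn ℝ (⊤ : ℕ∞) f Ω)
    (hhol : ∀ c : ℂ, ExtendsHolomorphicallyOn f ((fun z => z + c) '' S ∩ Ω)) :
    DifferentiableOn ℂ f Ω := by
  intro z hz
  obtain ⟨U, F, hU, hTU, hF, heqFT⟩ := hhol (z - p)
  have hzT : z ∈ (fun w => w + (z - p)) '' S ∩ Ω := ⟨⟨p, hp, by ring⟩, hz⟩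
  have hzU : z ∈ U := hTU hzT
  -- real derivative of f at z
  have hfd : HasFDerivAt f (fderiv ℝ f z) z := by
    have : DifferentiableAt ℝ f z :=
      ((hf.contDiffAt (hΩ.mem_nhds hz)).differentiableAt (by simp))
    exact this.hasFDerivAt
  -- complex derivative of F at z
  have hFdiff : DifferentiableAt ℂ F z := hF.differentiableAt (hU.mem_nhds hzU)
  have hFd : HasFDerivAt F (fderiv ℂ F z) z := hFdiff.hasFDerivAt
  set L : ℂ →L[ℝ] ℂ := fderiv ℝ f z - (fderiv ℂ F z).restrictScalars ℝ with hLdef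
  set g : ℂ → ℂ := fun w => f w - F w with hgdef
  have hgd : HasFDerivAt g L z := hfd.sub (hFd.restrictScalars ℝ)
  have hgz : g z = 0 := by simp [hgdef, heqFT hzT]
  -- the two directional derivatives vanish
  have key : ∀ t : ℂ, IsLimitDirection S p t → L t = 0 := by
    rintro t ⟨htn, q, hqS, hql, hdir⟩
    set Q : ℕ → ℂ := fun j => q j + (z - p) with hQdef
    have hQz : ∀ j, Q j ≠ z := by
      intro j h
      have hqp : q j = p := by
        have : q j + (z - p) = z := h
        linear_combination this
      exact (hqS j).2 hqp
    have hQl : Tendsto Q atTop (nhds z) := by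
      have : Tendsto (fun j => q j + (z - p)) atTop (nhds (p + (z - p))) :=
        hql.add tendsto_const_nhds
      simpa using this
    have hQΩ : ∀ᶠ j in atTop, Q j ∈ Ω := hQl (hΩ.mem_nhds hz)
    have hg0 : ∀ᶠ j in atTop, g (Q j) = 0 := by
      filter_upwards [hQΩ] with j hj
      have hQT : Q j ∈ (fun w => w + (z - p)) '' S ∩ Ω := ⟨⟨q j, (hqS j).1, rfl⟩, hj⟩
      simp [hgdef, heqFT hQT]
    have hQdir : Tendsto (fun j => (Q j - z) / (‖Q j - z‖ : ℂ)) atTop (nhds t) := by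
      have : ∀ j, (Q j - z) = q j - p := fun j => by simp [hQdef]; ring
      simpa [this] using hdir
    exact aux_dir_deriv_zero hgd hgz Q hQz hg0 hQl hQdir
  have hL0 : L = 0 := aux_clm_eq_zero h1.1 h2.1 hne hne' L (key t₁ h1) (key t₂ h2)
  have hfderiv : fderiv ℝ f z = (fderiv ℂ F z).restrictScalars ℝ := by
    have := sub_eq_zero.mp hL0
    exact this
  have hfC : HasFDerivAt f (fderiv ℂ F z) z := by
    rw [hasFDerivAt_iff_isLittleO_nhds_zero]
    have := hasFDerivAt_iff_isLittleO_nhds_zero.mp (hfderiv ▸ hfd)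
    exact this
  exact hfC.differentiableAt.differentiableWithinAt
end

section
/- Let S ⊆ ℂ, N a positive integer, and let S_N be the set of points p ∈ S such that S has at most N distinct limit directions at p. Then for every real d > 1, the d-dimensional Hausdorff measure of S_N is zero; in particular the Hausdorff dimension of S_N is at most 1. -/
/-!
At a point `p` with finitely many limit directions, choose a line through the origin containing
none of them. By compactness of the unit circle, all short chords of `S` issuing from `p` then make
an angle bounded below with that line, so the projection along the line is antilipschitz on a
small piece of `S` around `p`, and a set admitting an antilipschitz map to `ℝ` has `μH[d] = 0` for
`d > 1`. The lines can be taken among those through `1 + k i`, `k ∈ ℕ`, since each direction lies on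
at most one of them; quantising the angle bound and the chord length as well covers `S_N` by
countably many such pieces.
-/

open Complex Filter MeasureTheory

open Set Topology
open scoped NNReal

lemma exists_pos_forall_direction_mem {S U : Set ℂ} {p : ℂ} (hU : IsOpen U)
    (hL : ∀ t, IsLimitDirection S p t → t ∈ U) :
    ∃ r > 0, ∀ q ∈ S, q ≠ p → dist q p < r → (q - p) / (‖q - p‖ : ℂ) ∈ U := by
  by_contra! h
  choose q hqS hqp hq_dist hqU using fun j : ℕ => h (1 / (j + 1)) Nat.one_div_pos_of_nat
  have hdir : ∀ j, (q j - p) / (‖q j - p‖ : ℂ) ∈ Metric.sphere 0 1 \ U := fun j =>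
    ⟨by simp [sub_ne_zero.2 (hqp j)], hqU j⟩
  obtain ⟨t, ⟨ht, htU⟩, φ, hφ, hlim⟩ := ((isCompact_sphere 0 1).diff hU).tendsto_subseq hdir
  have hq : Tendsto q atTop (𝓝 p) :=
    tendsto_iff_dist_tendsto_zero.2 <| squeeze_zero (fun _ => dist_nonneg)
      (fun j => (hq_dist j).le) tendsto_one_div_add_atTop_nhds_zero_nat
  exact htU <| hL t
    ⟨by simpa using ht, q ∘ φ, fun j => ⟨hqS _, hqp _⟩, hq.comp hφ.tendsto_atTop, hlim⟩

lemma hausdorffMeasure_eq_zero_of_antilipschitzWith_domRestrict {X E : Type*} [EMetricSpace X]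
    [MeasurableSpace X] [BorelSpace X] [NormedAddCommGroup E] [NormedSpace ℝ E]
    [FiniteDimensional ℝ E] [MeasurableSpace E] [BorelSpace E] {P : Set X} {f : X → E}
    {K : ℝ≥0} (hf : AntilipschitzWith K (P.domRestrict f)) {d : ℝ}
    (hd : Module.finrank ℝ E < d) : μH[d] P = 0 := by
  have hd0 : 0 ≤ d := (Nat.cast_nonneg _).trans hd.le
  rw [← Subtype.range_coe (s := P), ← image_univ,
    isometry_subtype_coe.hausdorffMeasure_image (.inl hd0)]
  refine le_antisymm ((hf.hausdorffMeasure_preimage_le hd0 univ).trans ?_) zero_le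
  simp [Real.hausdorffMeasure_of_finrank_lt hd]

/-- The linear form whose kernel is the line through `1 + k i`. -/
noncomputable def slopeForm (k : ℕ) : ℂ →L[ℝ] ℝ := imCLM - (k : ℝ) • reCLM

lemma slopeForm_apply (k : ℕ) (z : ℂ) : slopeForm k z = z.im - k * z.re := rfl

lemma eventually_slopeForm_ne_zero {t : ℂ} (ht : t ≠ 0) : ∀ᶠ k in atTop, slopeForm k t ≠ 0 := by
  have hsub : {k : ℕ | slopeForm k t = 0}.Subsingleton := by
    intro k hk l hl
    simp only [mem_ofPred_eq, slopeForm_apply, sub_eq_zero] at hk hl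
    have hre : t.re ≠ 0 := fun h0 => ht (Complex.ext h0 (by simpa [h0] using hk))
    exact_mod_cast mul_right_cancel₀ hre (hk.symm.trans hl)
  simpa [← Nat.cofinite_eq_atTop] using hsub.finite.eventually_cofinite_notMem

lemma exists_one_lt_mul_abs_slopeForm {L : Set ℂ} (hL : L.Finite) (h0 : (0 : ℂ) ∉ L) :
    ∃ k m : ℕ, ∀ t ∈ L, 1 < (m + 1) * |slopeForm k t| := by
  have hne : ∀ᶠ k in atTop, ∀ t ∈ L, slopeForm k t ≠ 0 := hL.eventually_all.2 fun t ht =>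
    eventually_slopeForm_ne_zero (ne_of_mem_of_not_mem ht h0)
  obtain ⟨k, hk⟩ := hne.exists
  have hlarge : ∀ᶠ m : ℕ in atTop, ∀ t ∈ L, 1 < (m + 1) * |slopeForm k t| :=
    hL.eventually_all.2 fun t ht =>
      ((tendsto_natCast_atTop_atTop.atTop_add tendsto_const_nhds).atTop_mul_const
        (abs_pos.2 (hk t ht))).eventually_gt_atTop 1
  exact ⟨k, hlarge.exists⟩

def conePiece (S : Set ℂ) (n k m : ℕ) : Set ℂ :=
  {p ∈ S | ∀ q ∈ S, dist q p < 1 / (n + 1) → ‖q - p‖ ≤ (m + 1) * |slopeForm k (q - p)|}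

lemma hausdorffMeasure_conePiece {d : ℝ} (hd : 1 < d) (S : Set ℂ) (n k m : ℕ) :
    μH[d] (conePiece S n k m) = 0 := by
  refine measure_null_of_locally_null _ fun p _ => ⟨_, inter_mem_nhdsWithin _
    (Metric.ball_mem_nhds p (by positivity : (0 : ℝ) < 1 / (n + 1) / 2)), ?_⟩
  refine hausdorffMeasure_eq_zero_of_antilipschitzWith_domRestrict (f := slopeForm k)
    (K := ⟨m + 1, by positivity⟩) ?_ (by simpa using hd)
  refine AntilipschitzWith.of_le_mul_dist fun ⟨x, hxP, hx⟩ ⟨y, hyP, hy⟩ => ?_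
  have hyx : dist y x < 1 / (n + 1) := by
    rw [Metric.mem_ball] at hx hy
    linarith [dist_triangle_right y x p]
  show dist x y ≤ (m + 1 : ℝ) * dist (slopeForm k x) (slopeForm k y)
  rw [dist_comm, dist_eq_norm, dist_comm, Real.dist_eq, ← map_sub]
  exact hxP.2 y hyP.1 hyx

lemma exists_mem_conePiece {S : Set ℂ} {p : ℂ} (hp : p ∈ S)
    (hL : {t | IsLimitDirection S p t}.Finite) : ∃ n k m, p ∈ conePiece S n k m := by
  obtain ⟨k, m, hkm⟩ := exists_one_lt_mul_abs_slopeForm hL fun h => by simpa using h.1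
  obtain ⟨r, hr, hdir⟩ := exists_pos_forall_direction_mem
    (U := {u | 1 < (m + 1) * |slopeForm k u|}) (isOpen_lt continuous_const (by fun_prop)) hkm
  obtain ⟨n, hn⟩ := exists_nat_one_div_lt hr
  refine ⟨n, k, m, hp, fun q hq hqd => ?_⟩
  rcases eq_or_ne q p with rfl | hqp
  · simp
  have hnorm : 0 < ‖q - p‖ := norm_pos_iff.2 (sub_ne_zero.2 hqp)
  have h := hdir q hq hqp (hqd.trans hn)
  have hscale : slopeForm k ((q - p) / (‖q - p‖ : ℂ)) = slopeForm k (q - p) / ‖q - p‖ := by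
    simp only [slopeForm_apply, div_ofReal_re, div_ofReal_im]
    ring
  rw [mem_ofPred_eq, hscale, abs_div, abs_of_pos hnorm, mul_div_assoc', one_lt_div hnorm] at h
  exact h.le

lemma hausdorffMeasure_setOf_finite_limitDirections {d : ℝ} (hd : 1 < d) (S : Set ℂ) :
    μH[d] {p | p ∈ S ∧ {t | IsLimitDirection S p t}.Finite} = 0 := by
  refine measure_mono_null (fun p ⟨hp, hL⟩ => ?_) (measure_iUnion_null fun n =>
    measure_iUnion_null fun k => measure_iUnion_null fun m => hausdorffMeasure_conePiece hd S n k m)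
  obtain ⟨n, k, m, h⟩ := exists_mem_conePiece hp hL
  exact mem_iUnion.2 ⟨n, mem_iUnion.2 ⟨k, mem_iUnion.2 ⟨m, h⟩⟩⟩

theorem stmt2_general (S : Set ℂ) (N : ℕ) :
    (∀ d : ℝ, 1 < d →
      μH[d] {p | p ∈ S ∧ ∃ T : Finset ℂ, T.card ≤ N ∧
        ∀ t, IsLimitDirection S p t → t ∈ T} = 0) ∧
    dimH {p | p ∈ S ∧ ∃ T : Finset ℂ, T.card ≤ N ∧
        ∀ t, IsLimitDirection S p t → t ∈ T} ≤ 1 := by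
  have hnull : ∀ d : ℝ, 1 < d → μH[d] {p | p ∈ S ∧ ∃ T : Finset ℂ, T.card ≤ N ∧
      ∀ t, IsLimitDirection S p t → t ∈ T} = 0 := fun d hd => by
    refine measure_mono_null ?_ (hausdorffMeasure_setOf_finite_limitDirections hd S)
    rintro p ⟨hp, T, -, hT⟩
    exact ⟨hp, T.finite_toSet.subset hT⟩
  refine ⟨hnull, dimH_le fun d hd => ?_⟩
  by_contra! h
  exact ENNReal.zero_ne_top (hnull d (by exact_mod_cast h) ▸ hd)

theorem stmt2 (S : Set ℂ) (N : ℕ) (hN : 0 < N) :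
    (∀ d : ℝ, 1 < d →
      μH[d] {p | p ∈ S ∧ ∃ T : Finset ℂ, T.card ≤ N ∧
        ∀ t, IsLimitDirection S p t → t ∈ T} = 0) ∧
    dimH {p | p ∈ S ∧ ∃ T : Finset ℂ, T.card ≤ N ∧
        ∀ t, IsLimitDirection S p t → t ∈ T} ≤ 1 :=
  stmt2_general S N
end

section
/- Let S ⊆ ℂ have Hausdorff dimension strictly greater than 1. Then S has the Hartogs property with respect to translations: for every open connected Ω ⊆ ℂ and every C^∞ function f : Ω → ℂ such that for each c ∈ ℂ the restriction of f to (S + c) ∩ Ω extends holomorphically to an open neighborhood of (S + c) ∩ Ω, the function f is holomorphic on Ω. -/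
open Complex Filter MeasureTheory
open Metric Set Topology

/-- `v` is an accumulation direction of `S` at `s`. -/
def AccDirAux (S : Set ℂ) (s v : ℂ) : Prop :=
  ∀ ε > 0, ∃ x ∈ S, x ≠ s ∧ dist x s < ε ∧ dist (‖x - s‖⁻¹ • (x - s)) v < ε

lemma accDirAux_exists (S : Set ℂ) (s : ℂ) (C : Set ℂ) (hC : IsClosed C)
    (h : ∀ r > 0, ∃ x ∈ S, x ≠ s ∧ dist x s < r ∧ ‖x - s‖⁻¹ • (x - s) ∈ C) :
    ∃ v ∈ C, ‖v‖ = 1 ∧ AccDirAux S s v := by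
  choose x hxS hxne hxd hxC using fun n : ℕ => h (1 / (n + 1)) (by positivity)
  set d : ℕ → ℂ := fun n => ‖x n - s‖⁻¹ • (x n - s) with hd_def
  have hdn : ∀ n, ‖d n‖ = 1 := by
    intro n
    have : x n - s ≠ 0 := sub_ne_zero.2 (hxne n)
    have h0 : ‖x n - s‖ ≠ 0 := norm_ne_zero_iff.2 this
    simp only [hd_def, norm_smul, norm_inv, norm_norm]
    exact inv_mul_cancel₀ h0
  have hd : ∀ n, d n ∈ sphere (0 : ℂ) 1 ∩ C := fun n =>
    ⟨by simpa [mem_sphere_iff_norm] using hdn n, hxC n⟩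
  have hcomp : IsCompact (sphere (0 : ℂ) 1 ∩ C) := (isCompact_sphere 0 1).inter_right hC
  obtain ⟨v, hv, φ, hφ, hlim⟩ := hcomp.tendsto_subseq hd
  refine ⟨v, hv.2, by simpa [mem_sphere_iff_norm] using hv.1, ?_⟩
  intro ε hε
  obtain ⟨N₁, hN₁⟩ := (Metric.tendsto_atTop.1 hlim) ε hε
  obtain ⟨N₂, hN₂⟩ := exists_nat_one_div_lt hε
  set n := max N₁ N₂
  refine ⟨x (φ n), hxS _, hxne _, ?_, ?_⟩
  · calc dist (x (φ n)) s < 1 / (φ n + 1) := hxd _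
      _ ≤ 1 / (n + 1) := by
          apply div_le_div_of_nonneg_left one_pos.le (by positivity)
          have : (n : ℝ) ≤ φ n := by exact_mod_cast hφ.le_apply
          linarith
      _ ≤ 1 / (N₂ + 1) := by
          apply div_le_div_of_nonneg_left one_pos.le (by positivity)
          have : (N₂ : ℝ) ≤ n := by exact_mod_cast le_max_right N₁ N₂
          linarith
      _ < ε := hN₂
  · exact hN₁ n (le_max_left _ _)

lemma dimH_le_one_of_cone (u : ℂ) (T : Set ℂ)
    (h : ∀ x ∈ T, ∀ y ∈ T, ‖x - y‖ ≤ 4 * |((x - y) * (starRingEnd ℂ) u).re|) :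
    dimH T ≤ 1 := by
  classical
  set p : ℂ → ℝ := fun z => (z * (starRingEnd ℂ) u).re with hp_def
  have hp : ∀ x y : ℂ, p x - p y = ((x - y) * (starRingEnd ℂ) u).re := by
    intro x y; simp [hp_def, sub_mul]
  set g : ℝ → ℂ := fun t => if h : ∃ x ∈ T, p x = t then h.choose else 0 with hg_def
  have hg : ∀ t, (ht : ∃ x ∈ T, p x = t) → g t ∈ T ∧ p (g t) = t := by
    intro t ht
    simp only [hg_def, dif_pos ht]
    exact ⟨ht.choose_spec.1, ht.choose_spec.2⟩
  have hginj : ∀ x ∈ T, g (p x) = x := by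
    intro x hx
    obtain ⟨hgT, hgp⟩ := hg (p x) ⟨x, hx, rfl⟩
    have h2 := h _ hgT _ hx
    rw [← hp, hgp, sub_self, abs_zero, mul_zero, norm_le_zero_iff, sub_eq_zero] at h2
    exact h2
  have hTsub : T ⊆ g '' (p '' T) := fun x hx => ⟨p x, ⟨x, hx, rfl⟩, hginj x hx⟩
  have hlip : LipschitzOnWith 4 g (p '' T) := by
    apply LipschitzOnWith.of_dist_le_mul
    rintro a ⟨x, hx, rfl⟩ b ⟨y, hy, rfl⟩
    rw [hginj x hx, hginj y hy, dist_eq_norm, Real.dist_eq, hp]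
    simpa using h x hx y hy
  calc dimH T ≤ dimH (g '' (p '' T)) := dimH_mono hTsub
    _ ≤ dimH (p '' T) := hlip.dimH_image_le
    _ ≤ dimH (univ : Set ℝ) := dimH_mono (subset_univ _)
    _ = 1 := Real.dimH_univ

lemma exists_two_accDir (S : Set ℂ) (hS : 1 < dimH S) :
    ∃ s ∈ S, ∃ v₁ v₂ : ℂ, ‖v₁‖ = 1 ∧ ‖v₂‖ = 1 ∧ (¬ ∃ r : ℝ, v₂ = r • v₁) ∧
      AccDirAux S s v₁ ∧ AccDirAux S s v₂ := by
  by_contra hcon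
  push_neg at hcon
  obtain ⟨F, hFs, hFfin, hFcov⟩ :=
    (isCompact_sphere (0 : ℂ) 1).finite_cover_balls (by norm_num : (0:ℝ) < 1/16)
  haveI : Countable ↥F := hFfin.countable.to_subtype
  set Good : ℂ → ℕ → Set ℂ := fun u m =>
    {s | s ∈ S ∧ ∀ x ∈ S, dist x s < 1 / (m + 1) →
      ‖x - s‖ ≤ 4 * |((x - s) * (starRingEnd ℂ) u).re|} with hGood_def
  -- every point of S is in some Good u m
  have key : ∀ s ∈ S, ∃ u ∈ F, ∃ m : ℕ, s ∈ Good u m := by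
    intro s hs
    by_cases hiso : ∃ r > 0, ∀ x ∈ S, x ≠ s → ¬ dist x s < r
    · -- isolated point : condition is vacuous
      obtain ⟨r, hr, hrx⟩ := hiso
      obtain ⟨u, huF, -⟩ := Set.mem_iUnion₂.1 (hFcov (by simp : (1:ℂ) ∈ sphere (0:ℂ) 1))
      obtain ⟨m, hm⟩ := exists_nat_one_div_lt hr
      refine ⟨u, huF, m, hs, fun x hx hdx => ?_⟩
      rcases eq_or_ne x s with rfl | hne
      · simp [abs_nonneg]
      · exact absurd (lt_trans hdx hm) (hrx x hx hne)
    · push_neg at hiso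
      obtain ⟨v, -, hv1, haccv⟩ := accDirAux_exists S s univ isClosed_univ
        (fun r hr => by obtain ⟨x, h1, h2, h3⟩ := hiso r hr; exact ⟨x, h1, h2, h3, trivial⟩)
      -- all nearby directions are close to v or -v
      have hloc : ∃ r > 0, ∀ x ∈ S, x ≠ s → dist x s < r →
          dist (‖x - s‖⁻¹ • (x - s)) v < 1/2 ∨ dist (‖x - s‖⁻¹ • (x - s)) (-v) < 1/2 := by
        by_contra hl
        push_neg at hl
        have := accDirAux_exists S s {w | 1/2 ≤ dist w v ∧ 1/2 ≤ dist w (-v)}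
          (IsClosed.inter (isClosed_le continuous_const (continuous_id.dist continuous_const))
            (isClosed_le continuous_const (continuous_id.dist continuous_const)))
          (fun r hr => by
            obtain ⟨x, h1, h2, h3, h4, h5⟩ := hl r hr
            exact ⟨x, h1, h2, h3, h4, h5⟩)
        obtain ⟨w, ⟨hwv, hwmv⟩, hw1, haccw⟩ := this
        have hindep : ¬ ∃ r : ℝ, w = r • v := by
          rintro ⟨t, rfl⟩
          have ht : |t| = 1 := by
            have h := hw1
            rw [norm_smul, Real.norm_eq_abs, hv1, mul_one] at h
            exact h
          rcases (abs_eq (by norm_num : (0:ℝ) ≤ 1)).1 ht with rfl | rfl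
          · rw [one_smul, dist_self] at hwv; linarith
          · rw [neg_smul, one_smul, dist_self] at hwmv; linarith
        exact hcon s hs v w hv1 hw1 (fun r hr => hindep ⟨r, hr⟩) haccv haccw
      obtain ⟨r, hr, hrloc⟩ := hloc
      have hvs : v ∈ sphere (0:ℂ) 1 := by simp [mem_sphere_iff_norm, hv1]
      obtain ⟨u, huF, huv⟩ := Set.mem_iUnion₂.1 (hFcov hvs)
      obtain ⟨m, hm⟩ := exists_nat_one_div_lt hr
      refine ⟨u, huF, m, hs, fun x hx hdx => ?_⟩
      rcases eq_or_ne x s with rfl | hne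
      · simp [abs_nonneg]
      · have hdr : dist x s < r := lt_trans hdx hm
        set d := ‖x - s‖⁻¹ • (x - s) with hd_def
        have hxs0 : x - s ≠ 0 := sub_ne_zero.2 hne
        have hns : ‖x - s‖ ≠ 0 := norm_ne_zero_iff.2 hxs0
        have hdnorm : ‖d‖ = 1 := by
          simp only [hd_def, norm_smul, norm_inv, norm_norm]; exact inv_mul_cancel₀ hns
        have hbase : ∀ w : ℂ, ‖w‖ = 1 → dist d w < 1/2 →
            1/2 ≤ (d * (starRingEnd ℂ) w).re := by
          intro w hw hdw
          have h1 : d * (starRingEnd ℂ) w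
              = (d - w) * (starRingEnd ℂ) w + ((normSq w : ℝ) : ℂ) := by
            rw [← Complex.mul_conj]; ring
          have h2 : |((d - w) * (starRingEnd ℂ) w).re| ≤ ‖d - w‖ * ‖w‖ := by
            calc |((d - w) * (starRingEnd ℂ) w).re| ≤ ‖(d - w) * (starRingEnd ℂ) w‖ :=
                  Complex.abs_re_le_norm _
              _ = ‖d - w‖ * ‖w‖ := by rw [norm_mul, RCLike.norm_conj]
          have h3 : normSq w = 1 := by
            rw [Complex.normSq_eq_norm_sq, hw]; norm_num
          have h4 : ‖d - w‖ < 1/2 := by rwa [← dist_eq_norm]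
          rw [h1, Complex.add_re, Complex.ofReal_re, h3]
          have := abs_le.1 h2
          have hw' : ‖w‖ = 1 := hw
          nlinarith [norm_nonneg (d - w)]
        have ha : |(d * (starRingEnd ℂ) u).re - (d * (starRingEnd ℂ) v).re| ≤ 1/16 := by
          have heq : (d * (starRingEnd ℂ) u).re - (d * (starRingEnd ℂ) v).re
              = (d * (starRingEnd ℂ) (u - v)).re := by
            rw [map_sub, mul_sub, Complex.sub_re]
          rw [heq]
          calc |(d * (starRingEnd ℂ) (u - v)).re| ≤ ‖d * (starRingEnd ℂ) (u - v)‖ :=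
                Complex.abs_re_le_norm _
            _ = ‖d‖ * ‖u - v‖ := by rw [norm_mul, RCLike.norm_conj]
            _ ≤ 1 * (1/16) := by
                rw [hdnorm, one_mul, one_mul]
                have : dist v u < 1/16 := mem_ball.1 huv
                rw [← dist_eq_norm, dist_comm]
                linarith
            _ = 1/16 := by norm_num
        have hest : 1/4 ≤ |(d * (starRingEnd ℂ) u).re| := by
          rcases hrloc x hx hne hdr with hcase | hcase
          · have hb := hbase v hv1 hcase
            have := abs_le.1 ha
            rw [abs_le] at ha
            rcases le_or_gt 0 ((d * (starRingEnd ℂ) u).re) with h | h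
            · rw [_root_.abs_of_nonneg h]; linarith
            · rw [_root_.abs_of_neg h]; linarith
          · have hb := hbase (-v) (by rw [norm_neg, hv1]) hcase
            have hneg : (d * (starRingEnd ℂ) (-v)).re = -((d * (starRingEnd ℂ) v).re) := by
              rw [map_neg, mul_neg, Complex.neg_re]
            rw [hneg] at hb
            rw [abs_le] at ha
            rcases le_or_gt 0 ((d * (starRingEnd ℂ) u).re) with h | h
            · rw [_root_.abs_of_nonneg h]; linarith
            · rw [_root_.abs_of_neg h]; linarith
        have hxd : x - s = ‖x - s‖ • d := by
          rw [hd_def, smul_smul, mul_inv_cancel₀ hns, one_smul]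
        rw [hxd]
        have hre : ((‖x - s‖ • d) * (starRingEnd ℂ) u).re
            = ‖x - s‖ * (d * (starRingEnd ℂ) u).re := by
          rw [smul_mul_assoc, Complex.real_smul, Complex.mul_re]
          simp
        rw [hre, norm_smul, Real.norm_eq_abs, _root_.abs_of_nonneg (norm_nonneg _), hdnorm,
          mul_one, abs_mul, _root_.abs_of_nonneg (norm_nonneg _)]
        nlinarith [norm_nonneg (x - s)]
  -- covering argument
  set c2 : ℚ × ℚ → ℂ := fun q => ((q.1 : ℝ) : ℂ) + ((q.2 : ℝ) : ℂ) * I with hc2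
  have hcover : S ⊆ ⋃ (i : ↥F × ℕ × (ℚ × ℚ)),
      (Good i.1 i.2.1 ∩ ball (c2 i.2.2) (1 / (2 * (i.2.1 + 1)))) := by
    intro s hs
    obtain ⟨u, huF, m, hGm⟩ := key s hs
    have hpos : (0:ℝ) < 1 / (4 * (m + 1)) := by positivity
    obtain ⟨q1, hq1⟩ := exists_rat_near s.re hpos
    obtain ⟨q2, hq2⟩ := exists_rat_near s.im hpos
    have hq : dist s (c2 (q1, q2)) < 1 / (2 * (m + 1)) := by
      rw [Complex.dist_eq]
      calc ‖s - c2 (q1, q2)‖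
          ≤ |(s - c2 (q1, q2)).re| + |(s - c2 (q1, q2)).im| :=
            Complex.norm_le_abs_re_add_abs_im _
        _ < 1 / (4 * (m + 1)) + 1 / (4 * (m + 1)) := by
            apply add_lt_add
            · simpa [hc2] using hq1
            · simpa [hc2] using hq2
        _ = 1 / (2 * (m + 1)) := by
            have h1 : (4:ℝ) * ((m:ℝ) + 1) ≠ 0 := by positivity
            have h2 : (2:ℝ) * ((m:ℝ) + 1) ≠ 0 := by positivity
            rw [← add_div, div_eq_div_iff h1 h2]
            ring
    exact Set.mem_iUnion.2 ⟨⟨⟨u, huF⟩, m, (q1, q2)⟩, hGm, hq⟩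
  have hdim : dimH S ≤ 1 := by
    refine le_trans (dimH_mono hcover) ?_
    rw [dimH_iUnion]
    refine iSup_le fun i => ?_
    apply dimH_le_one_of_cone i.1.1
    rintro x ⟨⟨hxS, hxG⟩, hxb⟩ y ⟨⟨hyS, hyG⟩, hyb⟩
    apply hyG x hxS
    calc dist x y ≤ dist x (c2 i.2.2) + dist y (c2 i.2.2) := dist_triangle_right _ _ _
      _ < 1/(2*(i.2.1+1)) + 1/(2*(i.2.1+1)) := add_lt_add hxb hyb
      _ = 1/(i.2.1+1) := by
          have h1 : (2:ℝ) * ((i.2.1:ℝ) + 1) ≠ 0 := by positivity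
          have h2 : ((i.2.1:ℝ) + 1) ≠ 0 := by positivity
          rw [← add_div, div_eq_div_iff h1 h2]
          ring
  exact absurd hdim (not_le.2 hS)

lemma span_of_indep {v₁ v₂ : ℂ} (hv₁ : ‖v₁‖ = 1) (hindep : ¬ ∃ r : ℝ, v₂ = r • v₁) (w : ℂ) :
    ∃ a b : ℝ, w = a • v₁ + b • v₂ := by
  have hv1 : v₁ ≠ 0 := by intro h; rw [h, norm_zero] at hv₁; norm_num at hv₁
  set τ := v₂ / v₁ with hτ
  have hv2 : v₂ = τ * v₁ := by rw [hτ, div_mul_cancel₀ _ hv1]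
  have hτim : τ.im ≠ 0 := by
    intro h
    apply hindep
    refine ⟨τ.re, ?_⟩
    have hre : ((τ.re : ℝ) : ℂ) = τ := Complex.ext (by simp) (by simp [h])
    rw [Complex.real_smul, hre, ← hv2]
  refine ⟨(w / v₁).re - ((w / v₁).im / τ.im) * τ.re, (w / v₁).im / τ.im, ?_⟩
  set b : ℝ := (w / v₁).im / τ.im with hb
  set a : ℝ := (w / v₁).re - b * τ.re with ha
  have hkey : ((a : ℂ) + (b : ℂ) * τ) = w / v₁ := by
    apply Complex.ext
    · simp [ha]
    · simp [hb, div_mul_cancel₀ _ hτim]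
  have : w = ((a : ℂ) + (b : ℂ) * τ) * v₁ := by
    rw [hkey, div_mul_cancel₀ _ hv1]
  rw [this, hv2, Complex.real_smul, Complex.real_smul]
  ring

theorem stmt3 (S : Set ℂ) (hS : 1 < dimH S)
    (Ω : Set ℂ) (hΩ : IsOpen Ω) (hconn : IsConnected Ω)
    (f : ℂ → ℂ) (hf : ContDiffOn ℝ (⊤ : ℕ∞) f Ω)
    (hhol : ∀ c : ℂ, ExtendsHolomorphicallyOn f ((fun z => z + c) '' S ∩ Ω)) :
    DifferentiableOn ℂ f Ω := by
  obtain ⟨s, hsS, v₁, v₂, hv₁, hv₂, hindep, hacc₁, hacc₂⟩ := exists_two_accDir S hS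
  intro z₀ hz₀
  suffices h : DifferentiableAt ℂ f z₀ from h.differentiableWithinAt
  obtain ⟨U, F, hU, hTU, hFd, hEq⟩ := hhol (z₀ - s)
  have hz₀T : z₀ ∈ ((fun z => z + (z₀ - s)) '' S ∩ Ω) := ⟨⟨s, hsS, by ring⟩, hz₀⟩
  have hz₀U : z₀ ∈ U := hTU hz₀T
  have hfd : DifferentiableAt ℝ f z₀ :=
    ((hf z₀ hz₀).contDiffAt (hΩ.mem_nhds hz₀)).differentiableAt (by simp)
  have hFd' : DifferentiableAt ℂ F z₀ := (hFd z₀ hz₀U).differentiableAt (hU.mem_nhds hz₀U)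
  set B := fderiv ℂ F z₀ with hB
  set L : ℂ →L[ℝ] ℂ := fderiv ℝ f z₀ - B.restrictScalars ℝ with hL
  have hg : HasFDerivAt (fun z => f z - F z) L z₀ :=
    hfd.hasFDerivAt.sub (hFd'.hasFDerivAt.restrictScalars ℝ)
  have hg0 : f z₀ - F z₀ = 0 := sub_eq_zero.2 (hEq hz₀T)
  have hLzero : ∀ v : ℂ, AccDirAux S s v → L v = 0 := by
    intro v hv
    choose x hxS hxne hxd hxv using fun n : ℕ => hv (1 / (n + 1)) (by positivity)
    set y : ℕ → ℂ := fun n => x n + (z₀ - s) with hy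
    have hyz : ∀ n, y n - z₀ = x n - s := fun n => by rw [hy]; ring
    have honen : Tendsto (fun n : ℕ => 1 / ((n : ℝ) + 1)) atTop (𝓝 0) :=
      tendsto_one_div_add_atTop_nhds_zero_nat
    have hy0 : Tendsto y atTop (𝓝 z₀) := by
      rw [tendsto_iff_dist_tendsto_zero]
      refine squeeze_zero (fun n => dist_nonneg) (fun n => ?_) honen
      rw [dist_eq_norm, hyz n, ← dist_eq_norm]
      exact (hxd n).le
    have hyΩ : ∀ᶠ n in atTop, f (y n) - F (y n) = 0 := by
      filter_upwards [hy0.eventually (hΩ.mem_nhds hz₀)] with n hn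
      exact sub_eq_zero.2 (hEq ⟨⟨x n, hxS n, rfl⟩, hn⟩)
    set d : ℕ → ℂ := fun n => ‖x n - s‖⁻¹ • (x n - s) with hd
    have hdv : Tendsto d atTop (𝓝 v) := by
      rw [tendsto_iff_dist_tendsto_zero]
      exact squeeze_zero (fun n => dist_nonneg) (fun n => (hxv n).le) honen
    have h1 : Tendsto (fun n => L (d n)) atTop (𝓝 (L v)) :=
      (L.continuous.tendsto v).comp hdv
    have h2 : Tendsto (fun n => L (d n)) atTop (𝓝 0) := by
      rw [NormedAddCommGroup.tendsto_nhds_zero]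
      intro ε hε
      have ho : (fun n => (f (y n) - F (y n)) - (f z₀ - F z₀) - L (y n - z₀)) =o[atTop]
          (fun n => y n - z₀) := (hg.isLittleO).comp_tendsto hy0
      have ho2 := Asymptotics.isLittleO_iff.1 ho (show (0:ℝ) < ε / 2 by linarith)
      filter_upwards [ho2, hyΩ] with n h1n h2n
      rw [h2n, hg0] at h1n
      simp only [sub_zero, zero_sub, norm_neg] at h1n
      rw [hyz n] at h1n
      have hpos : 0 < ‖x n - s‖ := norm_pos_iff.2 (sub_ne_zero.2 (hxne n))
      have hdl : L (d n) = ‖x n - s‖⁻¹ • L (x n - s) := by rw [hd]; exact L.map_smul _ _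
      rw [hdl, norm_smul, norm_inv, norm_norm]
      calc ‖x n - s‖⁻¹ * ‖L (x n - s)‖ ≤ ‖x n - s‖⁻¹ * (ε / 2 * ‖x n - s‖) :=
            mul_le_mul_of_nonneg_left h1n (by positivity)
        _ = ε / 2 := by rw [mul_comm (ε / 2), ← mul_assoc, inv_mul_cancel₀ hpos.ne', one_mul]
        _ < ε := by linarith
    have hLv := tendsto_nhds_unique h1 h2
    exact hLv
  have hL1 := hLzero v₁ hacc₁
  have hL2 := hLzero v₂ hacc₂
  have hA : fderiv ℝ f z₀ = B.restrictScalars ℝ := by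
    apply ContinuousLinearMap.ext
    intro w
    obtain ⟨a, b, rfl⟩ := span_of_indep hv₁ hindep w
    have h0 : L (a • v₁ + b • v₂) = 0 := by
      rw [map_add]
      rw [L.map_smul, L.map_smul, hL1, hL2, smul_zero, smul_zero, add_zero]
    rw [hL, ContinuousLinearMap.sub_apply] at h0
    exact sub_eq_zero.1 h0
  rw [differentiableAt_iff_restrictScalars ℝ hfd]
  exact ⟨B, hA.symm⟩
end

section
/- Let S ⊆ ℂ have Hausdorff dimension strictly greater than 1 and let N be a positive integer. Then there exists a point p ∈ S at which S has more than N distinct limit directions. -/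
/-!
Suppose every point of `S` has at most `N` limit directions. At each `p ∈ S` pick, from a fixed
countable family of unit vectors, an axis `e` parallel to none of them; by compactness of the
circle, near `p` the set `S` misses a double cone `|⟪q - p, e⟫| > c ‖q - p‖` with `c < 1`. Where
this happens with fixed axis, aperture and radius, the projection onto `e⊥` has a Lipschitz
inverse on small pieces, so those points form a set of Hausdorff dimension at most `1`.
Countably many such sets cover `S`, so `dimH S ≤ 1`.
-/

open Complex Filter MeasureTheory

open Set Module Topology
open scoped RealInnerProductSpace ENNReal

theorem dimH_le_of_forall_exists_nhdsWithin {X : Type*} [EMetricSpace X]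
    [SecondCountableTopology X] {s : Set X} {d : ℝ≥0∞}
    (h : ∀ x ∈ s, ∃ t ∈ 𝓝[s] x, dimH t ≤ d) : dimH s ≤ d := by
  contrapose! h
  exact exists_mem_nhdsWithin_lt_dimH_of_lt_dimH h

section InnerProductSpace

variable {E : Type*} [NormedAddCommGroup E] [InnerProductSpace ℝ E]

def AvoidsDoubleCone (S : Set E) (e : E) (c r : ℝ) (p : E) : Prop :=
  ∀ q ∈ S, dist q p < r → |⟪q - p, e⟫| ≤ c * ‖q - p‖

theorem exists_abs_inner_lt_one_of_finite {s T : Set E} (hs : s.Infinite) (hT : T.Finite)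
    (hs₁ : ∀ e ∈ s, ‖e‖ = 1) (hT₁ : ∀ t ∈ T, ‖t‖ = 1) :
    ∃ e ∈ s, ∀ t ∈ T, |⟪t, e⟫| < 1 := by
  obtain ⟨e, hes, he⟩ := hs.exists_notMem_finite (hT.union hT.neg)
  refine ⟨e, hes, fun t ht ↦ (abs_real_inner_le_norm t e).trans_eq ?_ |>.lt_of_ne fun h ↦ he ?_⟩
  · rw [hT₁ t ht, hs₁ e hes, one_mul]
  rcases abs_eq (zero_le_one' ℝ) |>.1 h with h | h
  · exact .inl ((inner_eq_one_iff_of_norm_eq_one (hT₁ t ht) (hs₁ e hes)).1 h ▸ ht)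
  · refine .inr ?_
    rw [(inner_eq_neg_one_iff_of_norm_eq_one (hT₁ t ht) (hs₁ e hes)).1 h] at ht
    simpa using ht

theorem mul_norm_sq_le_norm_orthogonalProjectionOnto_sq_of_abs_inner_le {e x : E} {c : ℝ}
    (he : ‖e‖ = 1) (hx : |⟪x, e⟫| ≤ c * ‖x‖) :
    (1 - c ^ 2) * ‖x‖ ^ 2 ≤ ‖(ℝ ∙ e)ᗮ.orthogonalProjectionOnto x‖ ^ 2 := by
  have hpyth := (ℝ ∙ e).norm_sq_eq_add_norm_sq_projection x
  have hproj : ‖(ℝ ∙ e).orthogonalProjectionOnto x‖ = |⟪x, e⟫| := by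
    rw [Submodule.coe_norm, Submodule.coe_orthogonalProjectionOnto_apply,
      Submodule.starProjection_unit_singleton ℝ he, norm_smul, he, mul_one, real_inner_comm,
      Real.norm_eq_abs]
  have hsq : |⟪x, e⟫| ^ 2 ≤ (c * ‖x‖) ^ 2 := pow_le_pow_left₀ (abs_nonneg _) hx 2
  rw [hproj] at hpyth
  nlinarith

theorem antilipschitzWith_orthogonalProjectionOnto_of_abs_inner_le {e : E} {c : ℝ}
    {A : Set E} (he : ‖e‖ = 1) (hc₀ : 0 ≤ c) (hc₁ : c < 1)
    (hA : ∀ x ∈ A, ∀ y ∈ A, |⟪x - y, e⟫| ≤ c * ‖x - y‖) :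
    AntilipschitzWith (Real.toNNReal (√(1 - c ^ 2))⁻¹)
      fun x : A ↦ (ℝ ∙ e)ᗮ.orthogonalProjectionOnto (x : E) := by
  have hc : 0 < √(1 - c ^ 2) := Real.sqrt_pos.2 (by nlinarith)
  refine AntilipschitzWith.of_le_mul_dist fun x y ↦ ?_
  rw [Real.coe_toNNReal _ (inv_nonneg.2 hc.le), Subtype.dist_eq, dist_eq_norm, dist_eq_norm,
    ← map_sub, le_inv_mul_iff₀ hc]
  have key := mul_norm_sq_le_norm_orthogonalProjectionOnto_sq_of_abs_inner_le he (hA x x.2 y y.2)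
  calc √(1 - c ^ 2) * ‖(x : E) - y‖ = √((1 - c ^ 2) * ‖(x : E) - y‖ ^ 2) := by
        rw [Real.sqrt_mul' _ (sq_nonneg _), Real.sqrt_sq (norm_nonneg _)]
    _ ≤ √(‖(ℝ ∙ e)ᗮ.orthogonalProjectionOnto ((x : E) - y)‖ ^ 2) := Real.sqrt_le_sqrt key
    _ = _ := Real.sqrt_sq (norm_nonneg _)

variable [FiniteDimensional ℝ E]

theorem dimH_le_finrank_orthogonal_of_abs_inner_le {e : E} {c : ℝ} {A : Set E}
    (he : ‖e‖ = 1) (hc₀ : 0 ≤ c) (hc₁ : c < 1)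
    (hA : ∀ x ∈ A, ∀ y ∈ A, |⟪x - y, e⟫| ≤ c * ‖x - y‖) :
    dimH A ≤ finrank ℝ (ℝ ∙ e)ᗮ :=
  calc dimH A = dimH (univ : Set A) := by
        rw [← (isometry_subtype_coe (s := A)).dimH_image, image_univ, Subtype.range_coe]
    _ ≤ dimH (univ : Set (ℝ ∙ e)ᗮ) :=
        ((antilipschitzWith_orthogonalProjectionOnto_of_abs_inner_le he hc₀ hc₁ hA).le_dimH_image
          _).trans (dimH_mono (subset_univ _))
    _ = finrank ℝ (ℝ ∙ e)ᗮ := Real.dimH_univ_eq_finrank _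

theorem dimH_setOf_avoidsDoubleCone_le {S : Set E} {e : E} {c r : ℝ}
    (he : ‖e‖ = 1) (hc₀ : 0 ≤ c) (hc₁ : c < 1) (hr : 0 < r) :
    dimH {p ∈ S | AvoidsDoubleCone S e c r p} ≤ finrank ℝ (ℝ ∙ e)ᗮ := by
  refine dimH_le_of_forall_exists_nhdsWithin fun p _ ↦ ⟨_ ∩ Metric.ball p (r / 2),
    inter_mem_nhdsWithin _ (Metric.ball_mem_nhds p (half_pos hr)), ?_⟩
  refine dimH_le_finrank_orthogonal_of_abs_inner_le he hc₀ hc₁ fun x hx y hy ↦ ?_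
  refine hy.1.2 x hx.1.1 ?_
  calc dist x y ≤ dist x p + dist y p := dist_triangle_right _ _ _
    _ < r / 2 + r / 2 := add_lt_add hx.2 hy.2
    _ = r := add_halves r

end InnerProductSpace

theorem injective_circleExp_inv_succ :
    Function.Injective fun k : ℕ ↦ (Circle.exp (k + 1)⁻¹ : ℂ) := by
  intro k l h
  have hmem : ∀ n : ℕ, ((n : ℝ) + 1)⁻¹ ∈ Icc (0 : ℝ) 1 := fun n ↦
    ⟨by positivity, inv_le_one_of_one_le₀ (by simp)⟩
  have := Circle.exp_injOn_Icc (by linarith [Real.pi_gt_three]) (hmem k) (hmem l)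
    (Circle.coe_injective h)
  simpa using this

theorem exists_isLimitDirection_of_tendsto {S : Set ℂ} {p : ℂ} {q : ℕ → ℂ}
    (hq : ∀ j, q j ∈ S \ {p}) (hlim : Tendsto q atTop (𝓝 p)) :
    ∃ d, IsLimitDirection S p d ∧ ∃ φ : ℕ → ℕ, StrictMono φ ∧
      Tendsto (fun j ↦ (q (φ j) - p) / (‖q (φ j) - p‖ : ℂ)) atTop (𝓝 d) := by
  have hsphere : ∀ j, (q j - p) / (‖q j - p‖ : ℂ) ∈ Metric.sphere (0 : ℂ) 1 := fun j ↦ by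
    simp [sub_ne_zero.2 (hq j).2]
  obtain ⟨d, hd, φ, hφ, hdφ⟩ := (isCompact_sphere (0 : ℂ) 1).tendsto_subseq hsphere
  exact ⟨d, ⟨mem_sphere_zero_iff_norm.1 hd, q ∘ φ, fun j ↦ hq (φ j),
    hlim.comp hφ.tendsto_atTop, hdφ⟩, φ, hφ, hdφ⟩

theorem exists_avoidsDoubleCone_of_forall_isLimitDirection {S : Set ℂ} {p e : ℂ} {c : ℝ}
    (h : ∀ t, IsLimitDirection S p t → |⟪t, e⟫| < c) :
    ∃ j : ℕ, AvoidsDoubleCone S e c (1 / (j + 1)) p := by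
  by_contra! hcone
  simp only [AvoidsDoubleCone, not_forall, not_le, exists_prop] at hcone
  choose q hqS hqp hqc using hcone
  have hqne : ∀ j, q j ≠ p := fun j hj ↦ by
    simpa only [hj, sub_self, norm_zero, mul_zero, inner_zero_left, abs_zero, lt_self_iff_false]
      using hqc j
  have hlim : Tendsto q atTop (𝓝 p) := tendsto_iff_dist_tendsto_zero.2 <|
    squeeze_zero (fun _ ↦ dist_nonneg) (fun j ↦ (hqp j).le) tendsto_one_div_add_atTop_nhds_zero_nat
  obtain ⟨d, hd, φ, -, hdφ⟩ := exists_isLimitDirection_of_tendsto (fun j ↦ ⟨hqS j, hqne j⟩) hlim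
  have hc : ∀ j, c ≤ |⟪(q j - p) / (‖q j - p‖ : ℂ), e⟫| := fun j ↦ by
    have hpos : 0 < ‖q j - p‖ := norm_pos_iff.2 (sub_ne_zero.2 (hqne j))
    rw [div_eq_inv_mul, ← ofReal_inv, ← real_smul, real_inner_smul_left, abs_mul,
      abs_inv, abs_norm, le_inv_mul_iff₀ hpos, mul_comm]
    exact (hqc j).le
  exact (h d hd).not_ge (ge_of_tendsto'
    (((continuous_id.inner continuous_const).abs.tendsto d).comp hdφ) fun j ↦ hc (φ j))

theorem dimH_le_one_of_finite_limitDirections {S : Set ℂ}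
    (h : ∀ p ∈ S, {t | IsLimitDirection S p t}.Finite) : dimH S ≤ 1 := by
  set e : ℕ → ℂ := fun k ↦ (Circle.exp (k + 1)⁻¹ : ℂ)
  have he : ∀ k, ‖e k‖ = 1 := fun k ↦ Circle.norm_coe _
  have hcover : S ⊆ ⋃ (k : ℕ) (m : ℕ) (j : ℕ),
      {p ∈ S | AvoidsDoubleCone S (e k) (m / (m + 1)) (1 / (j + 1)) p} := by
    intro p hp
    obtain ⟨_, ⟨k, rfl⟩, hk⟩ := exists_abs_inner_lt_one_of_finite
      (infinite_range_of_injective injective_circleExp_inv_succ) (h p hp)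
      (by rintro _ ⟨k, rfl⟩; exact he k) fun t ht ↦ ht.1
    have hc : ∀ᶠ c in 𝓝 1, ∀ t ∈ {t | IsLimitDirection S p t}, |⟪t, e k⟫| < c :=
      (h p hp).eventually_all.2 fun t ht ↦ eventually_gt_nhds (hk t ht)
    obtain ⟨m, hm⟩ := ((tendsto_natCast_div_add_atTop (1 : ℝ)).eventually hc).exists
    obtain ⟨j, hj⟩ := exists_avoidsDoubleCone_of_forall_isLimitDirection hm
    exact mem_iUnion₂.2 ⟨k, m, mem_iUnion.2 ⟨j, hp, hj⟩⟩
  have hfinrank : ∀ k, finrank ℝ (ℝ ∙ e k)ᗮ = 1 := fun k ↦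
    have := Complex.finrank_real_complex_fact
    Submodule.finrank_orthogonal_span_singleton (norm_ne_zero_iff.1 ((he k).trans_ne one_ne_zero))
  refine (dimH_mono hcover).trans ?_
  simp only [dimH_iUnion, iSup_le_iff]
  intro k m j
  have hc₁ : (m : ℝ) / (m + 1) < 1 := (div_lt_one (by positivity)).2 (lt_add_one _)
  simpa [hfinrank] using dimH_setOf_avoidsDoubleCone_le (S := S) (he k) (by positivity) hc₁
    (by positivity : (0 : ℝ) < 1 / (j + 1))

theorem stmt4_general (S : Set ℂ) (hS : 1 < dimH S) (N : ℕ) :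
    ∃ p ∈ S, ∃ T : Finset ℂ, N < T.card ∧ ∀ t ∈ T, IsLimitDirection S p t := by
  by_contra! h
  refine hS.not_ge (dimH_le_one_of_finite_limitDirections fun p hp ↦ ?_)
  by_contra hinf
  obtain ⟨T, hTD, hT⟩ := Set.Infinite.exists_subset_card_eq hinf (N + 1)
  obtain ⟨t, htT, ht⟩ := h p hp T (by omega)
  exact ht (hTD htT)

theorem stmt4 (S : Set ℂ) (hS : 1 < dimH S) (N : ℕ) (hN : 0 < N) :
    ∃ p ∈ S, ∃ T : Finset ℂ, N < T.card ∧ ∀ t ∈ T, IsLimitDirection S p t :=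
  stmt4_general S hS N
end

section
/- Every real analytic curve Γ ⊆ ℂ fails the Hartogs property with respect to the group of affine automorphisms of ℂ: there exist a domain Ω ⊆ ℂ and a C^∞ function f : Ω → ℂ that is not holomorphic on Ω, such that for every affine map L(z) = az + b with a ≠ 0, the restriction of f to L(Γ) ∩ Ω extends holomorphically to an open neighborhood of L(Γ) ∩ Ω. (One may take Ω the unit disc and f(z) = z̄.) -/
open Complex

open Metric Set Filter

open scoped ENNReal NNReal Topology

private lemma exists_complex_extension {φ : ℝ → ℝ} (hφ : AnalyticAt ℝ φ 0) :
    ∃ (δ : ℝ) (Φ : ℂ → ℂ) (t : ℝ), 0 < δ ∧ (∀ z ∈ Metric.ball (0:ℂ) δ, AnalyticAt ℂ Φ z) ∧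
      (∀ x : ℝ, |x| < δ → Φ x = (φ x : ℂ)) ∧ HasDerivAt Φ (t : ℂ) 0 := by
  obtain ⟨ps, hps⟩ := hφ
  set c : ℕ → ℂ := fun n => (ps.coeff n : ℂ) with hc
  set q := FormalMultilinearSeries.ofScalars ℂ c with hqdef
  have hps' := hps
  obtain ⟨r, hrb⟩ := hps'
  obtain ⟨r', hr'0, hr'⟩ : ∃ r' : ℝ≥0, (0:ℝ≥0∞) < r' ∧ (r' : ℝ≥0∞) < r :=
    ENNReal.lt_iff_exists_nnreal_btwn.mp hrb.r_pos
  have hqcoeff : ∀ n, q.coeff n = c n := by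
    intro n
    have h := FormalMultilinearSeries.ofScalars_apply_eq (E := ℂ) c 1 n
    simpa [hqdef] using h
  have hnorm : ∀ n, ‖q n‖ = ‖ps n‖ := by
    intro n
    rw [hqdef, FormalMultilinearSeries.ofScalars_norm,
      FormalMultilinearSeries.norm_apply_eq_norm_coef, hc]
    simp
  have hsum : Summable fun n => ‖q n‖ * (r' : ℝ) ^ n := by
    simpa [hnorm] using ps.summable_norm_mul_pow (hr'.trans_le hrb.r_le)
  have hqrad : (r' : ℝ≥0∞) ≤ q.radius := q.le_radius_of_summable_norm hsum
  have hqpos : 0 < q.radius := lt_of_lt_of_le hr'0 hqrad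
  have hball : HasFPowerSeriesOnBall q.sum q 0 q.radius :=
    q.hasFPowerSeriesOnBall hqpos
  have hat : HasFPowerSeriesAt q.sum q 0 := hball.hasFPowerSeriesAt
  -- eventual analyticity near 0
  obtain ⟨δ₁, hδ₁0, hδ₁⟩ : ∃ δ₁ > 0, ∀ z : ℂ, dist z 0 < δ₁ → AnalyticAt ℂ q.sum z := by
    have := hat.analyticAt.eventually_analyticAt
    rw [Metric.eventually_nhds_iff] at this
    obtain ⟨ε, hε, h⟩ := this
    exact ⟨ε, hε, fun z hz => h hz⟩
  -- eventual sums
  have h1 := hasFPowerSeriesAt_iff'.mp hat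
  rw [Metric.eventually_nhds_iff] at h1
  obtain ⟨δ₂, hδ₂0, h2⟩ := h1
  have h3 := hasFPowerSeriesAt_iff'.mp hps
  rw [Metric.eventually_nhds_iff] at h3
  obtain ⟨δ₃, hδ₃0, h4⟩ := h3
  refine ⟨min δ₁ (min δ₂ δ₃), q.sum, ps.coeff 1, by positivity, ?_, ?_, ?_⟩
  · intro z hz
    rw [mem_ball] at hz
    exact hδ₁ z (lt_of_lt_of_le hz (min_le_left _ _))
  · intro x hx
    have hx2 : dist (x:ℂ) 0 < δ₂ := by
      simpa using lt_of_lt_of_le hx ((min_le_right _ _).trans (min_le_left _ _))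
    have hx3 : dist x (0:ℝ) < δ₃ := by
      simpa [Real.dist_eq] using lt_of_lt_of_le hx ((min_le_right _ _).trans (min_le_right _ _))
    have hs1 := h2 hx2
    have hs2 := h4 hx3
    have hs3 : HasSum (fun n => (((x - 0) ^ n • ps.coeff n : ℝ) : ℂ)) ((φ x : ℂ)) :=
      Complex.ofRealCLM.hasSum hs2
    have heq : (fun n => (((x - 0) ^ n • ps.coeff n : ℝ) : ℂ)) =
        fun n => ((x:ℂ) - 0) ^ n • q.coeff n := by
      funext n
      rw [hqcoeff n, hc]
      simp [smul_eq_mul]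
    rw [heq] at hs3
    exact hs1.unique hs3
  · have := hat.hasDerivAt
    have h5 : (q 1 fun _ => 1) = ((ps.coeff 1 : ℝ) : ℂ) := by
      rw [FormalMultilinearSeries.apply_eq_pow_smul_coeff, hqcoeff 1, hc]
      simp
    rwa [h5] at this

private lemma local_schwarz {Γ : Set ℂ} {p e : ℂ} {a ε : ℝ} {φ : ℝ → ℝ}
    (he : ‖e‖ = 1) (ha : 0 < a) (hε : 0 < ε)
    (hφ : AnalyticOnNhd ℝ φ (Set.Ioo (-a) a)) (hφ0 : φ 0 = 0)
    (hgraph : Γ ∩ Metric.ball p ε =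
      {w : ℂ | ∃ x ∈ Set.Ioo (-a) a, w = p + e * (↑x + Complex.I * ↑(φ x))} ∩ Metric.ball p ε) :
    ∃ r > 0, ∃ F : ℂ → ℂ, DifferentiableOn ℂ F (Metric.ball p r) ∧
      Set.EqOn (fun z => (starRingEnd ℂ) z) F (Γ ∩ Metric.ball p r) := by
  have he0 : e ≠ 0 := by
    intro h; rw [h] at he; simp at he
  have h0mem : (0:ℝ) ∈ Set.Ioo (-a) a := by constructor <;> simpa using ha
  obtain ⟨δ, Φ, t, hδ0, hΦan, hΦeq, hΦd⟩ := exists_complex_extension (hφ 0 h0mem)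
  have hΦ0 : Φ 0 = 0 := by
    have := hΦeq 0 (by simpa using hδ0)
    simpa [hφ0] using this
  set ψ : ℂ → ℂ := fun z => z + Complex.I * Φ z with hψdef
  have hψan : ∀ z ∈ Metric.ball (0:ℂ) δ, AnalyticAt ℂ ψ z := fun z hz =>
    (analyticAt_id).add (analyticAt_const.mul (hΦan z hz))
  have hψ0 : ψ 0 = 0 := by simp [hψdef, hΦ0]
  set d0 : ℂ := 1 + Complex.I * t with hd0def
  have hψd : HasDerivAt ψ d0 0 := by
    rw [hψdef, hd0def]
    exact (hasDerivAt_id (0:ℂ)).add (hΦd.const_mul Complex.I)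
  have hd0ne : d0 ≠ 0 := by
    intro h
    have h2 : d0.re = 0 := by rw [h]; simp
    rw [hd0def] at h2
    simp [Complex.add_re, Complex.mul_re] at h2
  have hψdstrict : HasStrictDerivAt ψ d0 0 := by
    obtain ⟨pψ, hpψ⟩ := hψan 0 (by simpa using hδ0)
    have h1 := hpψ.hasStrictDerivAt
    have h2 : (pψ 1 fun _ => 1) = d0 := hpψ.hasDerivAt.unique hψd
    rwa [h2] at h1
  set Λ := (hψdstrict.hasStrictFDerivAt_equiv hd0ne).toOpenPartialHomeomorph ψ with hΛdef
  have hΛcoe : ∀ z, Λ z = ψ z := fun z => rfl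
  have h0source : (0:ℂ) ∈ Λ.source :=
    (hψdstrict.hasStrictFDerivAt_equiv hd0ne).mem_toOpenPartialHomeomorph_source
  have h0target : (0:ℂ) ∈ Λ.target := by
    have := Λ.map_source h0source
    rwa [hΛcoe 0, hψ0] at this
  set g : ℂ → ℂ := ⇑Λ.symm with hgdef
  have hg0 : g 0 = 0 := by
    have := Λ.left_inv h0source
    rwa [hΛcoe 0, hψ0] at this
  -- deriv of ψ is nonzero near 0
  have hderivan : AnalyticOnNhd ℂ (deriv ψ) (Metric.ball (0:ℂ) δ) :=
    AnalyticOnNhd.deriv (fun z hz => hψan z hz)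
  have hderivcont : ContinuousAt (deriv ψ) 0 :=
    (hderivan 0 (by simpa using hδ0)).continuousAt
  have hd0eq : deriv ψ 0 = d0 := hψd.deriv
  obtain ⟨ρ₁, hρ₁0, hρ₁⟩ : ∃ ρ₁ > 0, ∀ z : ℂ, dist z 0 < ρ₁ → deriv ψ z ≠ 0 := by
    have h1 : ∀ᶠ z in 𝓝 (0:ℂ), deriv ψ z ≠ 0 :=
      hderivcont.eventually_ne (by rw [hd0eq]; exact hd0ne)
    rw [Metric.eventually_nhds_iff] at h1
    obtain ⟨ε₁, hε₁, h⟩ := h1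
    exact ⟨ε₁, hε₁, fun z hz => h hz⟩
  obtain ⟨ρ₂, hρ₂0, hρ₂⟩ : ∃ ρ₂ > 0, Metric.ball (0:ℂ) ρ₂ ⊆ Λ.source :=
    Metric.isOpen_iff.mp Λ.open_source 0 h0source
  set ρ : ℝ := min δ (min ρ₁ ρ₂) with hρdef
  have hρ0 : 0 < ρ := by positivity
  have hρδ : Metric.ball (0:ℂ) ρ ⊆ Metric.ball (0:ℂ) δ :=
    Metric.ball_subset_ball (min_le_left _ _)
  have hρne : ∀ z ∈ Metric.ball (0:ℂ) ρ, deriv ψ z ≠ 0 := by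
    intro z hz
    apply hρ₁
    calc dist z 0 < ρ := Metric.mem_ball.mp hz
    _ ≤ ρ₁ := (min_le_right _ _).trans (min_le_left _ _)
  have hρsource : Metric.ball (0:ℂ) ρ ⊆ Λ.source := fun z hz =>
    hρ₂ (Metric.ball_subset_ball ((min_le_right _ _).trans (min_le_right _ _)) hz)
  -- choose σ
  have hgcont0 : ContinuousAt g 0 := Λ.symm.continuousAt (by rwa [OpenPartialHomeomorph.symm_source])
  obtain ⟨σ₁, hσ₁0, hσ₁⟩ : ∃ σ₁ > 0, ∀ y : ℂ, dist y 0 < σ₁ → g y ∈ Metric.ball (0:ℂ) ρ := by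
    have h1 : ∀ᶠ y in 𝓝 (0:ℂ), g y ∈ Metric.ball (0:ℂ) ρ := by
      apply hgcont0.eventually_mem
      rw [hg0]
      exact Metric.ball_mem_nhds 0 hρ0
    rw [Metric.eventually_nhds_iff] at h1
    obtain ⟨ε₁, hε₁, h⟩ := h1
    exact ⟨ε₁, hε₁, fun y hy => h hy⟩
  obtain ⟨σ₂, hσ₂0, hσ₂⟩ : ∃ σ₂ > 0, Metric.ball (0:ℂ) σ₂ ⊆ Λ.target :=
    Metric.isOpen_iff.mp Λ.open_target 0 h0target
  set σ : ℝ := min σ₁ σ₂ with hσdef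
  have hσ0 : 0 < σ := by positivity
  have hσtarget : Metric.ball (0:ℂ) σ ⊆ Λ.target := fun z hz =>
    hσ₂ (Metric.ball_subset_ball (min_le_right _ _) hz)
  have hgmem : ∀ y ∈ Metric.ball (0:ℂ) σ, g y ∈ Metric.ball (0:ℂ) ρ := by
    intro y hy
    exact hσ₁ y (lt_of_lt_of_le (Metric.mem_ball.mp hy) (min_le_left _ _))
  -- g is differentiable on ball 0 σ
  have hgdiff : ∀ y ∈ Metric.ball (0:ℂ) σ, DifferentiableAt ℂ g y := by
    intro y hy
    have hyt : y ∈ Λ.target := hσtarget hy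
    have hcont : ContinuousAt g y := Λ.symm.continuousAt (by rwa [OpenPartialHomeomorph.symm_source])
    have hgy : g y ∈ Metric.ball (0:ℂ) ρ := hgmem y hy
    have hψdy : HasDerivAt ψ (deriv ψ (g y)) (g y) :=
      ((hψan (g y) (hρδ hgy)).differentiableAt).hasDerivAt
    have hne : deriv ψ (g y) ≠ 0 := hρne _ hgy
    have hev : ∀ᶠ z in 𝓝 y, ψ (g z) = z := by
      filter_upwards [Λ.open_target.mem_nhds hyt] with z hz
      rw [← hΛcoe]
      exact Λ.right_inv hz
    exact (HasDerivAt.of_local_left_inverse hcont hψdy hne hev).differentiableAt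
  -- the local Schwarz function
  set r : ℝ := min σ (min ε ρ) with hrdef
  have hr0 : 0 < r := by positivity
  refine ⟨r, hr0, fun w => (starRingEnd ℂ) p + (starRingEnd ℂ) e *
    (g ((w - p) / e) - Complex.I * Φ (g ((w - p) / e))), ?_, ?_⟩
  · -- differentiability
    intro w hw
    apply DifferentiableAt.differentiableWithinAt
    have hmw : (w - p) / e ∈ Metric.ball (0:ℂ) σ := by
      rw [Metric.mem_ball, dist_zero_right, norm_div, he, div_one]
      rw [Metric.mem_ball, dist_eq_norm] at hw
      exact lt_of_lt_of_le hw (min_le_left _ _)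
    have h1 : DifferentiableAt ℂ (fun w : ℂ => (w - p) / e) w :=
      (differentiableAt_id.sub (differentiableAt_const p)).div_const e
    have h2 : DifferentiableAt ℂ g ((w - p) / e) := hgdiff _ hmw
    have h3 : DifferentiableAt ℂ Φ (g ((w - p) / e)) :=
      (hΦan _ (hρδ (hgmem _ hmw))).differentiableAt
    have h4 : DifferentiableAt ℂ (fun w : ℂ => g ((w - p) / e)) w := h2.comp w h1
    have h5 : DifferentiableAt ℂ (fun w : ℂ => Φ (g ((w - p) / e))) w := (h3.comp w h4 : _)
    exact (differentiableAt_const _).add ((differentiableAt_const _).mul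
      (h4.sub ((differentiableAt_const _).mul h5)))
  · -- agreement with conj on Γ
    intro w hw
    have hwε : w ∈ Γ ∩ Metric.ball p ε := by
      refine ⟨hw.1, Metric.ball_subset_ball ((min_le_right _ _).trans (min_le_left _ _)) hw.2⟩
    rw [hgraph] at hwε
    obtain ⟨⟨x, hxI, hwx⟩, -⟩ := hwε
    have hwp : ‖w - p‖ < r := by
      have := hw.2
      rwa [Metric.mem_ball, dist_eq_norm] at this
    have hwpeq : ‖w - p‖ = ‖(x:ℂ) + Complex.I * (φ x : ℂ)‖ := by
      rw [hwx]
      rw [add_sub_cancel_left, norm_mul, he, one_mul]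
    have hxabs : |x| ≤ ‖(x:ℂ) + Complex.I * (φ x : ℂ)‖ := by
      have hre : ((x:ℂ) + Complex.I * (φ x : ℂ)).re = x := by simp
      calc |x| = |((x:ℂ) + Complex.I * (φ x : ℂ)).re| := by rw [hre]
      _ ≤ ‖(x:ℂ) + Complex.I * (φ x : ℂ)‖ := Complex.abs_re_le_norm _
    have hxr : |x| < r := by
      rw [hwpeq] at hwp
      linarith
    have hxρ : ((x:ℂ)) ∈ Metric.ball (0:ℂ) ρ := by
      rw [Metric.mem_ball, dist_zero_right, Complex.norm_real, Real.norm_eq_abs]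
      exact lt_of_lt_of_le hxr ((min_le_right _ _).trans (min_le_right _ _))
    have hxδ : |x| < δ := by
      have h6 : ρ ≤ δ := min_le_left _ _
      have h7 : r ≤ ρ := (min_le_right _ _).trans (min_le_right _ _)
      linarith
    have hψx : ψ (x:ℂ) = (x:ℂ) + Complex.I * (φ x : ℂ) := by
      rw [hψdef]
      simp only []
      rw [hΦeq x hxδ]
    have harg : (w - p) / e = (x:ℂ) + Complex.I * (φ x : ℂ) := by
      rw [hwx]
      field_simp
      ring
    have hgx : g ((w - p) / e) = (x:ℂ) := by
      rw [harg, ← hψx, ← hΛcoe]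
      exact Λ.left_inv (hρsource hxρ)
    show (starRingEnd ℂ) w =
      (starRingEnd ℂ) p + (starRingEnd ℂ) e * (g ((w - p) / e) - Complex.I * Φ (g ((w - p) / e)))
    rw [hgx, hΦeq x hxδ, hwx]
    simp only [map_add, map_mul, Complex.conj_ofReal, Complex.conj_I]
    ring

private lemma acc_point {Γ : Set ℂ} {p e : ℂ} {a ε : ℝ} {φ : ℝ → ℝ}
    (he : ‖e‖ = 1) (ha : 0 < a) (hε : 0 < ε)
    (hφ : AnalyticOnNhd ℝ φ (Set.Ioo (-a) a)) (hφ0 : φ 0 = 0)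
    (hgraph : Γ ∩ Metric.ball p ε =
      {w : ℂ | ∃ x ∈ Set.Ioo (-a) a, w = p + e * (↑x + Complex.I * ↑(φ x))} ∩ Metric.ball p ε) :
    ∃ᶠ z in 𝓝[≠] p, z ∈ Γ := by
  have he0 : e ≠ 0 := by intro h; rw [h] at he; simp at he
  have h0mem : (0:ℝ) ∈ Set.Ioo (-a) a := by constructor <;> simpa using ha
  set h : ℝ → ℂ := fun x => p + e * ((x:ℂ) + Complex.I * (φ x : ℂ)) with hdef
  have hφc : ContinuousAt φ 0 := (hφ 0 h0mem).continuousAt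
  have hcont : ContinuousAt h 0 := by
    apply continuousAt_const.add
    apply continuousAt_const.mul
    exact (Complex.continuous_ofReal.continuousAt).add
      (continuousAt_const.mul (Complex.continuous_ofReal.continuousAt.comp hφc))
  have h0eq : h 0 = p := by simp [hdef, hφ0]
  have T1 : Tendsto h (𝓝[>] (0:ℝ)) (𝓝 p) := by
    have := hcont.tendsto
    rw [h0eq] at this
    exact this.mono_left nhdsWithin_le_nhds
  have hne : ∀ x ∈ Set.Ioi (0:ℝ), h x ≠ p := by
    intro x hx hcontra
    rw [hdef] at hcontra
    simp only [add_eq_left] at hcontra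
    rcases mul_eq_zero.mp hcontra with h1 | h1
    · exact he0 h1
    · have : ((x:ℂ) + Complex.I * (φ x : ℂ)).re = 0 := by rw [h1]; simp
      simp only [Complex.add_re, Complex.ofReal_re, Complex.mul_re, Complex.I_re,
        Complex.I_im, Complex.ofReal_im] at this
      have hx' : (0:ℝ) < x := hx
      simp at this
      linarith
  have T2 : Tendsto h (𝓝[>] (0:ℝ)) (𝓝[≠] p) := by
    apply tendsto_nhdsWithin_of_tendsto_nhds_of_eventually_within _ T1
    filter_upwards [self_mem_nhdsWithin] with x hx
    exact hne x hx
  have hev : ∀ᶠ x in 𝓝[>] (0:ℝ), h x ∈ Γ := by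
    have h1 : ∀ᶠ x in 𝓝[>] (0:ℝ), x ∈ Set.Ioo (-a) a := by
      apply eventually_nhdsWithin_of_eventually_nhds
      exact eventually_of_mem (Ioo_mem_nhds (by linarith) ha) (fun x hx => hx)
    have h2 : ∀ᶠ x in 𝓝[>] (0:ℝ), h x ∈ Metric.ball p ε :=
      T1.eventually (eventually_of_mem (Metric.ball_mem_nhds p hε) (fun z hz => hz))
    filter_upwards [h1, h2] with x hx1 hx2
    have : h x ∈ {w : ℂ | ∃ x ∈ Set.Ioo (-a) a, w = p + e * (↑x + Complex.I * ↑(φ x))} ∩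
        Metric.ball p ε := ⟨⟨x, hx1, rfl⟩, hx2⟩
    rw [← hgraph] at this
    exact this.1
  exact T2.frequently (hev.frequently)

theorem stmt6 (Γ : Set ℂ) (hne : Γ.Nonempty)
    (hΓ : ∀ p ∈ Γ, ∃ (e : ℂ) (a ε : ℝ) (φ : ℝ → ℝ), ‖e‖ = 1 ∧ 0 < a ∧ 0 < ε ∧
      AnalyticOnNhd ℝ φ (Set.Ioo (-a) a) ∧ φ 0 = 0 ∧
      Γ ∩ Metric.ball p ε =
        {w : ℂ | ∃ x ∈ Set.Ioo (-a) a, w = p + e * (↑x + Complex.I * ↑(φ x))} ∩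
          Metric.ball p ε) :
    ∃ (Ω : Set ℂ) (f : ℂ → ℂ), IsOpen Ω ∧ IsConnected Ω ∧
      ContDiffOn ℝ (⊤ : ℕ∞) f Ω ∧ ¬ DifferentiableOn ℂ f Ω ∧
      ∀ a b : ℂ, a ≠ 0 →
        ExtendsHolomorphicallyOn f ((fun z => a * z + b) '' Γ ∩ Ω) := by
  classical
  have hloc : ∀ q ∈ Γ, ∃ r > 0, ∃ F : ℂ → ℂ, DifferentiableOn ℂ F (Metric.ball q r) ∧
      Set.EqOn (fun z => (starRingEnd ℂ) z) F (Γ ∩ Metric.ball q r) := by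
    intro q hq
    obtain ⟨e, a, ε, φ, he, ha, hε, hφ, hφ0, hgraph⟩ := hΓ q hq
    exact local_schwarz he ha hε hφ hφ0 hgraph
  have hacc : ∀ q ∈ Γ, ∃ᶠ z in 𝓝[≠] q, z ∈ Γ := by
    intro q hq
    obtain ⟨e, a, ε, φ, he, ha, hε, hφ, hφ0, hgraph⟩ := hΓ q hq
    exact acc_point he ha hε hφ hφ0 hgraph
  have hloc' : ∀ q ∈ Γ, ∃ r F, 0 < r ∧ DifferentiableOn ℂ F (Metric.ball q r) ∧
      Set.EqOn (fun z => (starRingEnd ℂ) z) F (Γ ∩ Metric.ball q r) := by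
    intro q hq
    obtain ⟨r, hr, F, h1, h2⟩ := hloc q hq
    exact ⟨r, F, hr, h1, h2⟩
  choose! r F hr hdiff heqF using hloc'
  -- compatibility of local extensions
  have key : ∀ q ∈ Γ, ∀ q' ∈ Γ, r q' ≤ r q → dist q q' < r q / 4 + r q' / 4 →
      Set.EqOn (F q) (F q') (Metric.ball q' (r q' / 4)) := by
    intro q hq q' hq' hle hdist
    have hrq : 0 < r q := hr q hq
    have hrq' : 0 < r q' := hr q' hq'
    have hq'q : dist q' q < r q := by
      rw [dist_comm]; linarith
    have hsub : Metric.ball q' (r q' / 4) ⊆ Metric.ball q (r q) := by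
      intro z hz
      rw [Metric.mem_ball] at *
      calc dist z q ≤ dist z q' + dist q' q := dist_triangle _ _ _
      _ < r q' / 4 + (r q / 4 + r q' / 4) := by rw [dist_comm q' q]; linarith
      _ ≤ r q := by linarith
    have hA1 : AnalyticOnNhd ℂ (F q) (Metric.ball q' (r q' / 4)) := fun z hz =>
      ((hdiff q hq).analyticOnNhd Metric.isOpen_ball) z (hsub hz)
    have hA2 : AnalyticOnNhd ℂ (F q') (Metric.ball q' (r q' / 4)) := fun z hz =>
      ((hdiff q' hq').analyticOnNhd Metric.isOpen_ball) z
        (Metric.ball_subset_ball (by linarith) hz)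
    have hconn : IsPreconnected (Metric.ball q' (r q' / 4)) :=
      (convex_ball q' _).isPreconnected
    have hq'mem : q' ∈ Metric.ball q' (r q' / 4) := Metric.mem_ball_self (by linarith)
    have hfreq : ∃ᶠ z in 𝓝[≠] q', F q z = F q' z := by
      have h1 := hacc q' hq'
      have h2 : ∀ᶠ z in 𝓝 q', z ∈ Metric.ball q (r q) ∩ Metric.ball q' (r q') := by
        refine eventually_of_mem ((Metric.isOpen_ball.inter Metric.isOpen_ball).mem_nhds
          ⟨?_, Metric.mem_ball_self hrq'⟩) (fun z hz => hz)
        rw [Metric.mem_ball]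
        exact hq'q
      refine ((h1.and_eventually (h2.filter_mono nhdsWithin_le_nhds))).mono ?_
      rintro z ⟨hzΓ, hz1, hz2⟩
      have e1 := heqF q hq ⟨hzΓ, hz1⟩
      have e2 := heqF q' hq' ⟨hzΓ, hz2⟩
      exact e1.symm.trans e2
    exact hA1.eqOn_of_preconnected_of_frequently_eq hA2 hconn hq'mem hfreq
  have compat : ∀ q ∈ Γ, ∀ q' ∈ Γ, ∀ w, w ∈ Metric.ball q (r q / 4) →
      w ∈ Metric.ball q' (r q' / 4) → F q w = F q' w := by
    intro q hq q' hq' w hw1 hw2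
    have hdist : dist q q' < r q / 4 + r q' / 4 := by
      rw [Metric.mem_ball] at hw1 hw2
      calc dist q q' ≤ dist q w + dist w q' := dist_triangle _ _ _
      _ < r q / 4 + r q' / 4 := by rw [dist_comm q w]; linarith
    rcases le_total (r q') (r q) with hle | hle
    · exact key q hq q' hq' hle hdist hw2
    · exact (key q' hq' q hq hle (by rwa [dist_comm, add_comm]) hw1).symm
  -- glue
  set V := ⋃ q ∈ Γ, Metric.ball q (r q / 4) with hVdef
  have hVopen : IsOpen V := isOpen_biUnion (fun q _ => Metric.isOpen_ball)
  have hΓV : Γ ⊆ V := by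
    intro q hq
    exact Set.mem_biUnion hq (Metric.mem_ball_self (by linarith [hr q hq]))
  set S : ℂ → ℂ := fun w =>
    if h : ∃ q, q ∈ Γ ∧ w ∈ Metric.ball q (r q / 4) then F h.choose w else 0 with hSdef
  have hSloc : ∀ q ∈ Γ, ∀ w ∈ Metric.ball q (r q / 4), S w = F q w := by
    intro q hq w hw
    have hex : ∃ q₁, q₁ ∈ Γ ∧ w ∈ Metric.ball q₁ (r q₁ / 4) := ⟨q, hq, hw⟩
    rw [hSdef]
    simp only [dif_pos hex]
    obtain ⟨h1, h2⟩ := hex.choose_spec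
    exact compat _ h1 _ hq w h2 hw
  have hSdiff : DifferentiableOn ℂ S V := by
    intro w hw
    rw [hVdef, Set.mem_iUnion₂] at hw
    obtain ⟨q, hq, hw'⟩ := hw
    apply DifferentiableAt.differentiableWithinAt
    have hFq : DifferentiableAt ℂ (F q) w :=
      (hdiff q hq).differentiableAt (Metric.isOpen_ball.mem_nhds
        (Metric.ball_subset_ball (by linarith [hr q hq]) hw'))
    have hev : S =ᶠ[𝓝 w] F q := by
      filter_upwards [Metric.isOpen_ball.mem_nhds hw'] with z hz
      exact hSloc q hq z hz
    exact hev.differentiableAt_iff.mpr hFq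
  have hSeq : Set.EqOn (fun z => (starRingEnd ℂ) z) S Γ := by
    intro z hz
    have h1 := hSloc z hz z (Metric.mem_ball_self (by linarith [hr z hz]))
    have h2 := heqF z hz ⟨hz, Metric.mem_ball_self (hr z hz)⟩
    rw [h1]
    exact h2
  -- assemble
  refine ⟨Set.univ, fun z => (starRingEnd ℂ) z, isOpen_univ, isConnected_univ, ?_, ?_, ?_⟩
  · -- smooth
    have heq : ⇑((Complex.conjCLE : ℂ ≃L[ℝ] ℂ) : ℂ →L[ℝ] ℂ) =
        fun z : ℂ => (starRingEnd ℂ) z := funext fun z => Complex.conjCLE_apply z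
    exact (heq ▸ ((Complex.conjCLE : ℂ ≃L[ℝ] ℂ) : ℂ →L[ℝ] ℂ).contDiff).contDiffOn
  · -- not holomorphic
    intro hcontra
    have hd : DifferentiableAt ℂ (fun z : ℂ => (starRingEnd ℂ) z) 0 :=
      (hcontra 0 (Set.mem_univ 0)).differentiableAt (isOpen_univ.mem_nhds (Set.mem_univ 0))
    set T := fderiv ℂ (fun z : ℂ => (starRingEnd ℂ) z) 0 with hTdef
    have h1 : HasFDerivAt (fun z : ℂ => (starRingEnd ℂ) z) (T.restrictScalars ℝ) 0 :=
      (hd.hasFDerivAt).restrictScalars ℝ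
    have h2 : HasFDerivAt (fun z : ℂ => (starRingEnd ℂ) z)
        ((Complex.conjCLE : ℂ ≃L[ℝ] ℂ) : ℂ →L[ℝ] ℂ) 0 := by
      have h3 := ((Complex.conjCLE : ℂ ≃L[ℝ] ℂ) : ℂ →L[ℝ] ℂ).hasFDerivAt (x := (0:ℂ))
      have heq : ⇑((Complex.conjCLE : ℂ ≃L[ℝ] ℂ) : ℂ →L[ℝ] ℂ) =
          fun z : ℂ => (starRingEnd ℂ) z := funext fun z => Complex.conjCLE_apply z
      rwa [heq] at h3
    have h4 : T.restrictScalars ℝ = ((Complex.conjCLE : ℂ ≃L[ℝ] ℂ) : ℂ →L[ℝ] ℂ) :=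
      h1.unique h2
    have e1 : T 1 = 1 := by
      have := congrArg (fun (L : ℂ →L[ℝ] ℂ) => L 1) h4
      simpa [Complex.conjCLE_apply] using this
    have eI : T Complex.I = -Complex.I := by
      have := congrArg (fun (L : ℂ →L[ℝ] ℂ) => L Complex.I) h4
      simpa [Complex.conjCLE_apply, Complex.conj_I] using this
    have eI2 : T Complex.I = Complex.I := by
      have h5 : T Complex.I = T (Complex.I • (1:ℂ)) := by norm_num
      rw [h5, T.map_smul, e1]
      simp
    rw [eI2] at eI
    have : (2 : ℂ) * Complex.I = 0 := by linear_combination eI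
    simp [Complex.I_ne_zero] at this
  · -- extensions
    intro A b hA
    refine ⟨(fun w => (w - b) / A) ⁻¹' V,
      fun w => (starRingEnd ℂ) A * S ((w - b) / A) + (starRingEnd ℂ) b, ?_, ?_, ?_, ?_⟩
    · exact hVopen.preimage (by fun_prop)
    · rintro w ⟨⟨z, hz, rfl⟩, -⟩
      simp only [Set.mem_preimage]
      have harg : (A * z + b - b) / A = z := by field_simp; ring
      rw [harg]
      exact hΓV hz
    · intro w hw
      have hd : DifferentiableWithinAt ℂ (fun w => S ((w - b) / A))
          ((fun w => (w - b) / A) ⁻¹' V) w := by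
        apply DifferentiableWithinAt.comp (t := V) w (hSdiff _ hw)
        · exact ((differentiableWithinAt_id.sub (differentiableWithinAt_const b)).div_const A)
        · intro y hy
          exact hy
      exact (hd.const_mul _).add_const _
    · rintro w ⟨⟨z, hz, rfl⟩, -⟩
      have harg : (A * z + b - b) / A = z := by field_simp; ring
      show (starRingEnd ℂ) (A * z + b) = _
      simp only [harg]
      rw [← hSeq hz]
      simp only [map_add, map_mul]
end

section
/- Let N, K be positive integers and ε > 0 such that the closed unit disc intersected with the sector {q : |q/|q| - 1| ≤ ε} is contained in the union of the K closed discs D(j/K, 1/K), j = 1, …, K. Let A ⊆ ℂ and p ∈ ℂ, r > 0 be such that there exist unit vectors t₁, …, t_N with A ∩ D(p, 2r) ⊆ ⋃ₖ {q : |(q - p)/|q - p| - tₖ| < ε} ∪ {p}. Then A ∩ D(p, r) can be covered by K·N closed discs of radius 2r/K. -/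
/-!
For each direction `t k`, the inverse of the similarity `w ↦ p + 2 r (t k) w` maps the points of
`D(p, 2r)` whose direction from `p` is `ε`-close to `t k` into the unit sector
`D(0, 1) ∩ {q : |q/|q| - 1| ≤ ε}`, and the similarity maps each disc `D(j/K, 1/K)` onto a disc of
radius `2r/K`. Pulling back
the `K` discs covering the sector thus yields `K` discs per direction. The centre `p` has no
direction, but lies on the boundary of the disc with `j = 1` of any direction.
-/

open Complex Set

namespace Complex

def unitSector (ε : ℝ) : Set ℂ :=
  Metric.closedBall 0 1 ∩ {q : ℂ | ‖q / (‖q‖ : ℂ) - 1‖ ≤ ε}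

lemma norm_div_norm_sub_one_of_div_mul (z u : ℂ) (hu : ‖u‖ = 1) {s : ℝ} (hs : 0 < s) :
    ‖z / (s * u) / (‖z / (s * u)‖ : ℂ) - 1‖ = ‖z / (‖z‖ : ℂ) - u‖ := by
  have hu0 : u ≠ 0 := norm_ne_zero_iff.1 (by simp [hu])
  rcases eq_or_ne z 0 with rfl | hz
  · simp [hu]
  have hnorm : ‖z / (s * u)‖ = ‖z‖ / s := by
    rw [norm_div, norm_mul, hu, mul_one, norm_real, Real.norm_of_nonneg hs.le]
  have hz' : (‖z‖ : ℂ) ≠ 0 := by exact_mod_cast norm_ne_zero_iff.2 hz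
  have hs' : (s : ℂ) ≠ 0 := by exact_mod_cast hs.ne'
  calc ‖z / (s * u) / (‖z / (s * u)‖ : ℂ) - 1‖ = ‖(z / ‖z‖ - u) / u‖ := by
        rw [hnorm]; push_cast; congr 1; field_simp
    _ = ‖z / (‖z‖ : ℂ) - u‖ := by rw [norm_div, hu, div_one]

lemma div_mul_mem_unitSector {z u : ℂ} (hu : ‖u‖ = 1) {s ε : ℝ} (hs : 0 < s) (hz : ‖z‖ ≤ s)
    (hdir : ‖z / (‖z‖ : ℂ) - u‖ ≤ ε) :
    z / (s * u) ∈ unitSector ε := by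
  refine ⟨?_, ?_⟩
  · rw [mem_closedBall_zero_iff, norm_div, norm_mul, hu, mul_one, norm_real,
      Real.norm_of_nonneg hs.le]
    exact div_le_one_of_le₀ hz hs.le
  · exact (norm_div_norm_sub_one_of_div_mul z u hu hs).trans_le hdir

lemma exists_mem_closedBall_of_unitSector_subset {K : ℕ} {ε s : ℝ}
    (hcover : unitSector ε ⊆ ⋃ j ∈ Finset.Icc 1 K, Metric.closedBall ((j : ℂ) / (K : ℂ)) (1 / K))
    {p q u : ℂ} (hu : ‖u‖ = 1) (hs : 0 < s) (hq : q ∈ Metric.closedBall p s)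
    (hdir : ‖(q - p) / (‖q - p‖ : ℂ) - u‖ ≤ ε) :
    ∃ j ∈ Finset.Icc 1 K, q ∈ Metric.closedBall (p + s * u * ((j : ℂ) / K)) (s / K) := by
  have hsu : (s : ℂ) * u ≠ 0 :=
    mul_ne_zero (ofReal_ne_zero.2 hs.ne') (norm_ne_zero_iff.1 (by simp [hu]))
  set w := (q - p) / (s * u)
  have hw := div_mul_mem_unitSector hu hs (mem_closedBall_iff_norm.1 hq) hdir
  obtain ⟨j, hj, hwj⟩ := mem_iUnion₂.1 (hcover hw)
  refine ⟨j, hj, ?_⟩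
  have hq_eq : q = p + s * u * w := by
    rw [mul_div_cancel₀ _ hsu, add_sub_cancel]
  calc dist q (p + s * u * ((j : ℂ) / K))
      = ‖(s : ℂ) * u‖ * dist w ((j : ℂ) / K) := by
        rw [hq_eq, dist_add_left, ← smul_eq_mul, ← smul_eq_mul (s * u), dist_smul₀]
    _ ≤ s * (1 / K) := by
        rw [norm_mul, hu, mul_one, norm_real, Real.norm_of_nonneg hs.le]
        exact mul_le_mul_of_nonneg_left hwj hs.le
    _ = s / K := mul_one_div s K

end Complex

theorem stmt16_general (N K : ℕ) (hN : 0 < N) (hK : 0 < K) (ε : ℝ)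
    (hcover : Metric.closedBall (0 : ℂ) 1 ∩ {q : ℂ | ‖q / (‖q‖ : ℂ) - 1‖ ≤ ε} ⊆
      ⋃ j ∈ Finset.Icc 1 K, Metric.closedBall ((j : ℂ) / (K : ℂ)) (1 / K))
    (A : Set ℂ) (p : ℂ) (r : ℝ)
    (t : Fin N → ℂ) (ht : ∀ k, ‖t k‖ = 1)
    (hA : A ∩ Metric.closedBall p (2 * r) ⊆
      (⋃ k, {q : ℂ | ‖(q - p) / (‖q - p‖ : ℂ) - t k‖ < ε}) ∪ {p}) :
    ∃ c : Fin (K * N) → ℂ,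
      A ∩ Metric.closedBall p r ⊆ ⋃ i, Metric.closedBall (c i) (2 * r / K) := by
  set c : Fin K × Fin N → ℂ := fun jk => p + (2 * r : ℝ) * t jk.2 * (((jk.1 + 1 : ℕ) : ℂ) / K)
  refine ⟨fun i => c (finProdFinEquiv.symm i), ?_⟩
  rw [finProdFinEquiv.symm.surjective.iUnion_comp fun jk => Metric.closedBall (c jk) (2 * r / K)]
  rintro q ⟨hqA, hq⟩
  rcases eq_or_ne q p with rfl | hqp
  · have hr : 0 ≤ r := dist_nonneg.trans hq
    refine mem_iUnion.2 ⟨(⟨0, hK⟩, ⟨0, hN⟩), ?_⟩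
    rw [Metric.mem_closedBall, dist_comm, dist_eq_norm]
    simp [c, ht, abs_of_nonneg hr, div_eq_mul_inv]
  have hr : 0 < r := (dist_pos.2 hqp).trans_le hq
  have hq₂ : q ∈ Metric.closedBall p (2 * r) := Metric.closedBall_subset_closedBall (by linarith) hq
  obtain ⟨k, hk⟩ := mem_iUnion.1 ((hA ⟨hqA, hq₂⟩).resolve_right hqp)
  obtain ⟨j, hj, hqj⟩ :=
    exists_mem_closedBall_of_unitSector_subset hcover (ht k) (by positivity) hq₂ hk.le
  obtain ⟨j, rfl⟩ : ∃ j' : ℕ, j = j' + 1 := ⟨j - 1, by grind⟩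
  exact mem_iUnion.2 ⟨(⟨j, by grind⟩, k), hqj⟩

theorem stmt16 (N K : ℕ) (hN : 0 < N) (hK : 0 < K) (ε : ℝ) (hε : 0 < ε)
    (hcover : Metric.closedBall (0 : ℂ) 1 ∩ {q : ℂ | ‖q / (‖q‖ : ℂ) - 1‖ ≤ ε} ⊆
      ⋃ j ∈ Finset.Icc 1 K, Metric.closedBall ((j : ℂ) / (K : ℂ)) (1 / K))
    (A : Set ℂ) (p : ℂ) (r : ℝ) (hr : 0 < r)
    (t : Fin N → ℂ) (ht : ∀ k, ‖t k‖ = 1)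
    (hA : A ∩ Metric.closedBall p (2 * r) ⊆
      (⋃ k, {q : ℂ | ‖(q - p) / (‖q - p‖ : ℂ) - t k‖ < ε}) ∪ {p}) :
    ∃ c : Fin (K * N) → ℂ,
      A ∩ Metric.closedBall p r ⊆ ⋃ i, Metric.closedBall (c i) (2 * r / K) :=
  stmt16_general N K hN hK ε hcover A p r t ht hA
end

section
/- Suppose a set A ⊆ ℂ has the property that it can be covered by L discs of radius ρ, and for every disc D of radius r ≤ ρ the set A ∩ D can be covered by K·N discs of radius 2r/K, where K, N, L are positive integers with 2^d·N/K^{d-1} < 1 for a given real d > 1. Then the d-dimensional Hausdorff measure of A is zero. -/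
/-!
Refining each of the `L` discs of radius `ρ` into `K N` discs of radius `2ρ/K`, and iterating,
covers `A` by `L (K N)^ν` discs of radius `ρ (2/K)^ν`. The corresponding `d`-dimensional sums
are `L (2ρ)^d q^ν` with `q = K N (2/K)^d = 2^d N / K^(d-1) < 1`, so they tend to `0` while the
radii do, which forces `μH[d] A = 0`.
-/

open MeasureTheory Topology Filter Metric

section Covers

variable {X : Type*} [PseudoMetricSpace X] {A : Set X}

theorem exists_closedBall_cover_mul {n M : ℕ} {r s : ℝ}
    (hA : ∃ c : Fin n → X, A ⊆ ⋃ i, closedBall (c i) r)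
    (hrefine : ∀ p, ∃ c : Fin M → X, A ∩ closedBall p r ⊆ ⋃ i, closedBall (c i) s) :
    ∃ c : Fin (n * M) → X, A ⊆ ⋃ i, closedBall (c i) s := by
  obtain ⟨c, hc⟩ := hA
  choose c' hc' using fun i => hrefine (c i)
  refine ⟨fun k => c' (finProdFinEquiv.symm k).1 (finProdFinEquiv.symm k).2, fun x hx => ?_⟩
  obtain ⟨i, hi⟩ := Set.mem_iUnion.1 (hc hx)
  obtain ⟨j, hj⟩ := Set.mem_iUnion.1 (hc' i ⟨hx, hi⟩)
  exact Set.mem_iUnion.2 ⟨finProdFinEquiv (i, j), by simpa using hj⟩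

theorem exists_closedBall_cover_pow {L M : ℕ} {ρ t : ℝ} (hρ : 0 < ρ) (ht0 : 0 < t)
    (ht1 : t ≤ 1)
    (h0 : ∃ c : Fin L → X, A ⊆ ⋃ i, closedBall (c i) ρ)
    (hrefine : ∀ p r, 0 < r → r ≤ ρ →
      ∃ c : Fin M → X, A ∩ closedBall p r ⊆ ⋃ i, closedBall (c i) (t * r))
    (ν : ℕ) : ∃ c : Fin (L * M ^ ν) → X, A ⊆ ⋃ i, closedBall (c i) (ρ * t ^ ν) := by
  induction ν with
  | zero => rwa [pow_zero, mul_one, pow_zero, mul_one]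
  | succ ν ih =>
    have hr : ρ * t ^ ν ≤ ρ := mul_le_of_le_one_right hρ.le (pow_le_one₀ ht0.le ht1)
    rw [pow_succ, ← mul_assoc, pow_succ', mul_left_comm]
    exact exists_closedBall_cover_mul ih fun p => hrefine p _ (by positivity) hr

theorem ediam_closedBall_le_ofReal (x : X) (r : ℝ) :
    ediam (closedBall x r) ≤ ENNReal.ofReal (2 * r) :=
  ediam_le_of_forall_dist_le fun _ hy _ hz =>
    (dist_triangle_right _ _ x).trans (by linarith [mem_closedBall.1 hy, mem_closedBall.1 hz])

end Covers

theorem hausdorffMeasure_eq_zero_of_closedBall_covers {X : Type*} [MetricSpace X]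
    [MeasurableSpace X] [BorelSpace X] {d : ℝ} (hd : 0 ≤ d) {A : Set X} {m : ℕ → ℕ}
    {c : ∀ n, Fin (m n) → X} {r : ℕ → ℝ} (hr0 : ∀ n, 0 ≤ r n)
    (hr : Tendsto r atTop (𝓝 0))
    (hA : ∀ n, A ⊆ ⋃ i, closedBall (c n i) (r n))
    (hsum : Tendsto (fun n => (m n : ℝ) * (2 * r n) ^ d) atTop (𝓝 0)) :
    μH[d] A = 0 := by
  have hdiam : ∀ n i, ediam (closedBall (c n i) (r n)) ^ d ≤ ENNReal.ofReal ((2 * r n) ^ d) :=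
    fun n i => by
      rw [← ENNReal.ofReal_rpow_of_nonneg (by linarith [hr0 n]) hd]
      exact ENNReal.rpow_le_rpow (ediam_closedBall_le_ofReal _ _) hd
  have hsum_le : ∀ n, ∑ i, ediam (closedBall (c n i) (r n)) ^ d
      ≤ ENNReal.ofReal ((m n : ℝ) * (2 * r n) ^ d) := fun n =>
    calc _ ≤ ∑ _i : Fin (m n), ENNReal.ofReal ((2 * r n) ^ d) :=
          Finset.sum_le_sum fun i _ => hdiam n i
      _ = _ := by
          rw [Finset.sum_const, Finset.card_univ, Fintype.card_fin, nsmul_eq_mul,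
            ENNReal.ofReal_mul (Nat.cast_nonneg _), ENNReal.ofReal_natCast]
  have hsum' : Tendsto (fun n => ∑ i, ediam (closedBall (c n i) (r n)) ^ d) atTop (𝓝 0) := by
    refine tendsto_of_tendsto_of_tendsto_of_le_of_le tendsto_const_nhds ?_ (fun _ => zero_le)
      hsum_le
    simpa using ENNReal.tendsto_ofReal hsum
  have hr' : Tendsto (fun n => ENNReal.ofReal (2 * r n)) atTop (𝓝 0) := by
    simpa using ENNReal.tendsto_ofReal (hr.const_mul 2)
  refine le_antisymm ?_ zero_le
  calc μH[d] A ≤ liminf (fun n => ∑ i, ediam (closedBall (c n i) (r n)) ^ d) atTop :=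
        Measure.hausdorffMeasure_le_liminf_sum d A _ hr' _
          (.of_forall fun n i => ediam_closedBall_le_ofReal _ _) (.of_forall hA)
    _ = 0 := hsum'.liminf_eq

theorem tendsto_mul_pow_mul_mul_pow_rpow_nhds_zero {L M s t d : ℝ} (hM : 0 ≤ M) (hs : 0 ≤ s)
    (ht : 0 ≤ t) (h : M * t ^ d < 1) :
    Tendsto (fun n : ℕ => L * M ^ n * (s * t ^ n) ^ d) atTop (𝓝 0) := by
  have hform : ∀ n : ℕ, L * M ^ n * (s * t ^ n) ^ d = L * s ^ d * (M * t ^ d) ^ n := fun n => by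
    rw [Real.mul_rpow hs (by positivity), ← Real.rpow_pow_comm ht, mul_pow]
    ring
  simp_rw [hform]
  simpa using (tendsto_pow_atTop_nhds_zero_of_lt_one (by positivity) h).const_mul (L * s ^ d)

theorem mul_mul_div_rpow {K : ℝ} (hK : 0 < K) {a : ℝ} (ha : 0 ≤ a) (N d : ℝ) :
    K * N * (a / K) ^ d = a ^ d * N / K ^ (d - 1) := by
  rw [Real.div_rpow ha hK.le, Real.rpow_sub hK, Real.rpow_one]
  field_simp

theorem lt_of_rpow_mul_lt_rpow_sub_one {a N K d : ℝ} (ha : 1 ≤ a) (hN : 1 ≤ N) (hK : 0 ≤ K)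
    (hd : 1 ≤ d) (h : a ^ d * N < K ^ (d - 1)) : a < K := by
  by_contra! hKa
  have : K ^ (d - 1) ≤ a ^ d * N :=
    calc K ^ (d - 1) ≤ a ^ (d - 1) := Real.rpow_le_rpow hK hKa (by linarith)
      _ ≤ a ^ d := Real.rpow_le_rpow_of_exponent_le ha (by linarith)
      _ ≤ a ^ d * N := le_mul_of_one_le_right (by positivity) hN
  linarith

theorem stmt17_general (A : Set ℂ) (K N L : ℕ) (hK : 0 < K) (hN : 0 < N)
    (d : ℝ) (hd : 1 < d) (hB : (2 : ℝ) ^ d * N / (K : ℝ) ^ (d - 1) < 1)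
    (ρ : ℝ) (hρ : 0 < ρ)
    (hcov0 : ∃ c : Fin L → ℂ, A ⊆ ⋃ i, Metric.closedBall (c i) ρ)
    (hcov : ∀ (p : ℂ) (r : ℝ), 0 < r → r ≤ ρ →
      ∃ c : Fin (K * N) → ℂ,
        A ∩ Metric.closedBall p r ⊆ ⋃ i, Metric.closedBall (c i) (2 * r / K)) :
    μH[d] A = 0 := by
  have hK0 : (0 : ℝ) < K := by exact_mod_cast hK
  have hK2 : (2 : ℝ) < K := lt_of_rpow_mul_lt_rpow_sub_one one_le_two (by exact_mod_cast hN)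
    hK0.le hd.le ((div_lt_one (by positivity)).1 hB)
  have ht0 : (0 : ℝ) < 2 / K := by positivity
  have ht1 : 2 / (K : ℝ) < 1 := (div_lt_one hK0).2 hK2
  choose c hc using exists_closedBall_cover_pow hρ ht0 ht1.le hcov0
    (by simpa only [div_mul_eq_mul_div] using hcov)
  refine hausdorffMeasure_eq_zero_of_closedBall_covers (by linarith) (fun n => by positivity)
    (by simpa using (tendsto_pow_atTop_nhds_zero_of_lt_one ht0.le ht1).const_mul ρ) hc ?_
  simp only [Nat.cast_mul, Nat.cast_pow, ← mul_assoc]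
  refine tendsto_mul_pow_mul_mul_pow_rpow_nhds_zero (by positivity) (by positivity) ht0.le ?_
  rwa [mul_mul_div_rpow hK0 zero_le_two]

theorem stmt17 (A : Set ℂ) (K N L : ℕ) (hK : 0 < K) (hN : 0 < N) (hL : 0 < L)
    (d : ℝ) (hd : 1 < d) (hB : (2 : ℝ) ^ d * N / (K : ℝ) ^ (d - 1) < 1)
    (ρ : ℝ) (hρ : 0 < ρ)
    (hcov0 : ∃ c : Fin L → ℂ, A ⊆ ⋃ i, Metric.closedBall (c i) ρ)
    (hcov : ∀ (p : ℂ) (r : ℝ), 0 < r → r ≤ ρ →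
      ∃ c : Fin (K * N) → ℂ,
        A ∩ Metric.closedBall p r ⊆ ⋃ i, Metric.closedBall (c i) (2 * r / K)) :
    μH[d] A = 0 :=
  stmt17_general A K N L hK hN d hd hB ρ hρ hcov0 hcov
end
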